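/- arXiv:1305.6198 — 9 statements merged into one kernel-verified Lean document; each statement's English description precedes it below -/
import Mathlib

section
/- Let A : (α, β) → ℝ^{N×N} be a matrix-valued function with locally integrable entries such that A(t) has nonnegative off-diagonal entries for all t, and let x : (α, β) → ℝ^N be an absolutely continuous solution of x' = A(t)x with x(t₀) having all coordinates strictly positive. Then all coordinates of x(t) remain strictly positive for t ∈ [t₀, β). -/
/-!
Let `t₁` be the first time after `t₀` at which some coordinate, say `xᵢ`, vanishes. On `[t₀, t₁]`
all coordinates are nonnegative, so the cooperativity of `A` gives `xᵢ' ≥ aᵢᵢ xᵢ ≥ -|aᵢᵢ| xᵢ`,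
hence `xᵢ(t) ≤ ∫ₜ^{t₁} |aᵢᵢ| xᵢ`. Taking `s < t₁` with `∫ₛ^{t₁} |aᵢᵢ| ≤ 1/2`, the maximum `U` of
`xᵢ` on `[s, t₁]` satisfies `U ≤ U / 2`, so `xᵢ ≤ 0` on `[s, t₁]`, contradicting the choice of `t₁`.
-/

open MeasureTheory Set Filter Topology Finset
open scoped Matrix

theorem exists_first_zero_of_continuousOn {g : ℝ → ℝ} {a b : ℝ} (hab : a ≤ b)
    (hg : ContinuousOn g (Icc a b)) (ha : 0 < g a) (hb : g b ≤ 0) :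
    ∃ c ∈ Ioc a b, g c = 0 ∧ ∀ s ∈ Ico a c, 0 < g s := by
  set S := Icc a b ∩ g ⁻¹' Iic 0
  have hS_closed : IsClosed S := hg.preimage_isClosed_of_isClosed isClosed_Icc isClosed_Iic
  have hS_bdd : BddBelow S := ⟨a, fun s hs => hs.1.1⟩
  have hcS : sInf S ∈ S := hS_closed.csInf_mem ⟨b, ⟨hab, le_rfl⟩, hb⟩ hS_bdd
  have hpos : ∀ s ∈ Ico a (sInf S), 0 < g s := fun s hs => not_le.1 fun hgs =>
    hs.2.not_ge (csInf_le hS_bdd ⟨⟨hs.1, hs.2.le.trans hcS.1.2⟩, hgs⟩)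
  have hac : a < sInf S := hcS.1.1.lt_of_ne fun h => (h ▸ hcS.2 : g a ≤ 0).not_gt ha
  obtain ⟨z, hz, hgz⟩ := intermediate_value_Icc' hac.le (hg.mono (Icc_subset_Icc_right hcS.1.2))
    ⟨hcS.2, ha.le⟩
  have hzc : z = sInf S :=
    le_antisymm hz.2 (csInf_le hS_bdd ⟨⟨hz.1, hz.2.trans hcS.1.2⟩, hgz.le⟩)
  exact ⟨sInf S, ⟨hac, hcS.1.2⟩, hzc ▸ hgz, hpos⟩

theorem exists_Icc_nonpos_of_le_integral_mul {u c : ℝ → ℝ} {a b : ℝ} (hab : a < b)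
    (hu : ContinuousOn u (Icc a b)) (hc : IntegrableOn c (Icc a b))
    (hc₀ : ∀ t ∈ Icc a b, 0 ≤ c t) (hle : ∀ t ∈ Icc a b, u t ≤ ∫ τ in t..b, c τ * u τ) :
    ∃ s ∈ Ico a b, ∀ t ∈ Icc s b, u t ≤ 0 := by
  have hc_int : ∀ s ∈ Icc a b, IntervalIntegrable c volume s b := fun s hs =>
    (hc.mono_set (uIcc_of_le hs.2 ▸ Icc_subset_Icc_left hs.1)).intervalIntegrable
  have htail : Tendsto (fun s => ∫ τ in s..b, c τ) (𝓝[<] b) (𝓝 0) := by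
    have hcont := intervalIntegral.continuousOn_primitive_interval_left (uIcc_of_le hab.le ▸ hc)
    rw [uIcc_of_le hab.le] at hcont
    simpa [← nhdsWithin_Ioo_eq_nhdsLT hab] using
      ((hcont b (right_mem_Icc.2 hab.le)).mono Ioo_subset_Icc_self).tendsto
  obtain ⟨s, hs_small, hs⟩ :=
    ((htail.eventually (eventually_le_nhds one_half_pos)).and (Ioo_mem_nhdsLT hab)).exists
  have hsb : Icc s b ⊆ Icc a b := Icc_subset_Icc_left hs.1.le
  obtain ⟨m, hm, hmax⟩ :=
    isCompact_Icc.exists_isMaxOn (nonempty_Icc.2 hs.2.le) (hu.mono hsb)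
  refine ⟨s, ⟨hs.1.le, hs.2⟩, fun t ht => (hmax ht).trans ?_⟩
  by_contra! hum
  have hmb : Icc m b ⊆ Icc s b := Icc_subset_Icc_left hm.1
  have hcm := hc_int m (hsb hm)
  have : u m ≤ u m / 2 := calc
    u m ≤ ∫ τ in m..b, c τ * u τ := hle m (hsb hm)
    _ ≤ ∫ τ in m..b, c τ * u m := by
      refine intervalIntegral.integral_mono_on hm.2 ?_ (hcm.mul_const _) fun τ hτ =>
        mul_le_mul_of_nonneg_left (hmax (hmb hτ)) (hc₀ τ (hsb (hmb hτ)))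
      exact (intervalIntegrable_iff_integrableOn_Icc_of_le hm.2).2 <|
        (hc.mono_set (hsb.trans' hmb)).mul_continuousOn (hu.mono (hsb.trans' hmb)) isCompact_Icc
    _ = (∫ τ in m..b, c τ) * u m := intervalIntegral.integral_mul_const _ _
    _ ≤ (∫ τ in s..b, c τ) * u m := by
      refine mul_le_mul_of_nonneg_right (intervalIntegral.integral_mono_interval hm.1 hm.2 le_rfl
        ?_ (hc_int s (hsb (left_mem_Icc.2 hs.2.le)))) hum.le
      exact (ae_restrict_mem measurableSet_Ioc).mono fun τ hτ =>
        hc₀ τ ⟨hs.1.le.trans hτ.1.le, hτ.2⟩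
    _ ≤ 1 / 2 * u m := mul_le_mul_of_nonneg_right hs_small hum.le
    _ = u m / 2 := by ring
  linarith

theorem Matrix.diag_mul_le_mulVec_apply {n R : Type*} [Fintype n] [DecidableEq n] [Semiring R]
    [PartialOrder R] [IsOrderedRing R] {M : Matrix n n R} {v : n → R} (i : n)
    (hM : ∀ j, j ≠ i → 0 ≤ M i j) (hv : ∀ j, 0 ≤ v j) : M i i * v i ≤ (M *ᵥ v) i := by
  rw [Matrix.mulVec, dotProduct, ← Finset.add_sum_erase _ _ (mem_univ i)]
  exact le_add_of_nonneg_right <|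
    sum_nonneg fun j hj => mul_nonneg (hM j (ne_of_mem_erase hj)) (hv j)

section Cooperative

variable {N : ℕ} {I : Set ℝ} [I.OrdConnected] {A : ℝ → Matrix (Fin N) (Fin N) ℝ}
  {x : ℝ → Fin N → ℝ}

theorem integrableOn_mulVec_apply (hint : ∀ i j, LocallyIntegrableOn (fun t => A t i j) I)
    (hcont : ∀ j, ContinuousOn (fun t => x t j) I) {a b : ℝ} (ha : a ∈ I) (hb : b ∈ I) (i : Fin N) :
    IntegrableOn (fun τ => ∑ j, A τ i j * x τ j) (uIcc a b) := by
  have hab : uIcc a b ⊆ I := Set.OrdConnected.uIcc_subset ‹_› ha hb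
  exact integrable_finsetSum _ fun j _ => ((hint i j).integrableOn_compact_subset hab
    isCompact_uIcc).mul_continuousOn ((hcont j).mono hab) isCompact_uIcc

theorem sub_le_integral_abs_diag_mul {t₀ : ℝ} (ht₀ : t₀ ∈ I)
    (hint : ∀ i j, LocallyIntegrableOn (fun t => A t i j) I)
    (hML : ∀ t ∈ I, ∀ i j, i ≠ j → 0 ≤ A t i j)
    (hcont : ∀ j, ContinuousOn (fun t => x t j) I)
    (hsol : ∀ t ∈ I, ∀ i, x t i = x t₀ i + ∫ τ in t₀..t, ∑ j, A τ i j * x τ j)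
    {s b : ℝ} (hs : s ∈ I) (hb : b ∈ I) (hsb : s ≤ b) (hnn : ∀ τ ∈ Icc s b, ∀ j, 0 ≤ x τ j)
    (i : Fin N) :
    x s i - x b i ≤ ∫ τ in s..b, |A τ i i| * x τ i := by
  have hsub : Icc s b ⊆ I := Set.OrdConnected.out ‹_› hs hb
  have hf := fun {a c} (ha : a ∈ I) (hc : c ∈ I) =>
    (integrableOn_mulVec_apply hint hcont ha hc i).intervalIntegrable
  calc x s i - x b i = ∫ τ in s..b, -∑ j, A τ i j * x τ j := by
        rw [hsol s hs, hsol b hb, intervalIntegral.integral_neg,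
          ← intervalIntegral.integral_interval_sub_left (hf ht₀ hb) (hf ht₀ hs)]
        ring
    _ ≤ ∫ τ in s..b, |A τ i i| * x τ i := by
      refine intervalIntegral.integral_mono_on hsb (hf hs hb).neg ?_ fun τ hτ => ?_
      · exact (intervalIntegrable_iff_integrableOn_Icc_of_le hsb).2 <|
          IntegrableOn.mul_continuousOn ((hint i i).integrableOn_compact_subset hsub
            isCompact_Icc).abs ((hcont i).mono hsub) isCompact_Icc
      · have hdiag := Matrix.diag_mul_le_mulVec_apply (M := A τ) i
          (fun j hj => hML τ (hsub hτ) i j hj.symm) (hnn τ hτ)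
        have habs := mul_le_mul_of_nonneg_right (neg_abs_le (A τ i i)) (hnn τ hτ i)
        simp only [Matrix.mulVec, dotProduct] at hdiag
        linarith

end Cooperative

/-- Positivity of coordinates of Carathéodory solutions of cooperative linear systems. -/
theorem stmt1 {N : ℕ} {α β t₀ : ℝ} (ht₀ : t₀ ∈ Set.Ioo α β)
    (A : ℝ → Matrix (Fin N) (Fin N) ℝ)
    (hint : ∀ i j, MeasureTheory.LocallyIntegrableOn (fun t => A t i j) (Set.Ioo α β))
    (hML : ∀ t ∈ Set.Ioo α β, ∀ i j, i ≠ j → 0 ≤ A t i j)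
    (x : ℝ → Fin N → ℝ)
    (hcont : ∀ i, ContinuousOn (fun t => x t i) (Set.Ioo α β))
    (hsol : ∀ t ∈ Set.Ioo α β, ∀ i,
      x t i = x t₀ i + ∫ τ in t₀..t, ∑ j, A τ i j * x τ j)
    (hpos : ∀ i, 0 < x t₀ i) :
    ∀ t ∈ Set.Ico t₀ β, ∀ i, 0 < x t i := by
  intro T ⟨hT₀, hTβ⟩
  by_contra! hneg
  obtain ⟨i₀, hi₀⟩ := hneg
  have : Nonempty (Fin N) := ⟨i₀⟩
  set g : ℝ → ℝ := fun t => univ.inf' univ_nonempty (x t)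
  have hg_le : ∀ t i, g t ≤ x t i := fun t i => inf'_le _ (mem_univ i)
  have hsub : Icc t₀ T ⊆ Ioo α β := Icc_subset_Ioo ht₀.1 hTβ
  obtain ⟨t₁, ⟨ht₀₁, ht₁T⟩, hg₁, hg_pos⟩ := exists_first_zero_of_continuousOn hT₀
    (ContinuousOn.finset_inf'_apply _ fun i _ => (hcont i).mono hsub)
    ((lt_inf'_iff _).2 fun i _ => hpos i) ((hg_le T i₀).trans hi₀)
  have hsub₁ : Icc t₀ t₁ ⊆ Ioo α β := (Icc_subset_Icc_right ht₁T).trans hsub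
  have hnn : ∀ τ ∈ Icc t₀ t₁, ∀ j, 0 ≤ x τ j := fun τ hτ j =>
    hτ.2.eq_or_lt.elim (fun h => h ▸ hg₁ ▸ hg_le t₁ j)
      fun h => ((hg_pos τ ⟨hτ.1, h⟩).trans_le (hg_le τ j)).le
  obtain ⟨i, -, hi⟩ := exists_mem_eq_inf' univ_nonempty (x t₁)
  have hxi : x t₁ i = 0 := hi ▸ hg₁
  obtain ⟨s, hs, hs_nonpos⟩ := exists_Icc_nonpos_of_le_integral_mul ht₀₁
    ((hcont i).mono hsub₁) ((hint i i).integrableOn_compact_subset hsub₁ isCompact_Icc).abs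
    (fun _ _ => abs_nonneg _) fun t ht => by
      simpa [hxi] using sub_le_integral_abs_diag_mul ht₀ hint hML hcont hsol
        (hsub₁ ht) (hsub₁ (right_mem_Icc.2 ht₀₁.le)) ht.2
        (fun τ hτ => hnn τ ⟨ht.1.trans hτ.1, hτ.2⟩) i
  exact (hg_pos s hs).not_ge ((hg_le s i).trans (hs_nonpos s (left_mem_Icc.2 hs.2.le)))
end

section
/- Let A : (α, β) → ℝ^{N×N} have locally integrable entries with A(t) an ML-matrix for each t, and let x(t) = (x₁(t), …, x_N(t)) be a Carathéodory solution of x' = A(t)x with all coordinates of x(t₀) strictly positive. Then for all t ∈ (t₀, β): ∏ᵢ xᵢ(t) ≥ exp(∫_{t₀}^t (tr A(τ) + 2 ∑_{j<k} √(a_{jk}(τ) a_{kj}(τ))) dτ) · ∏ᵢ xᵢ(t₀). -/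
/-!
Along a solution that stays positive, `log xᵢ` is absolutely continuous with derivative
`(A x)ᵢ / xᵢ = aᵢᵢ + ∑_{j ≠ i} aᵢⱼ xⱼ / xᵢ`. Summing over `i` and pairing the terms `(j, k)` and
`(k, j)`, AM-GM gives `aⱼₖ xₖ / xⱼ + aₖⱼ xⱼ / xₖ ≥ 2 √(aⱼₖ aₖⱼ)` because the product of the two
terms does not depend on `x`; integrating yields the bound on `log ∏ xᵢ`. Positivity itself comes
from the diagonal part alone: while `x > 0`, `(A x)ᵢ / xᵢ ≥ aᵢᵢ`, so `xᵢ` cannot reach `0`.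
-/

open MeasureTheory Set Filter Matrix

theorem LipschitzOnWith.comp_absolutelyContinuousOnInterval {X Y : Type*}
    [PseudoMetricSpace X] [PseudoMetricSpace Y] {g : X → Y} {f : ℝ → X} {K : NNReal}
    {s : Set X} {a b : ℝ} (hg : LipschitzOnWith K g s)
    (hf : AbsolutelyContinuousOnInterval f a b) (hfs : MapsTo f (uIcc a b) s) :
    AbsolutelyContinuousOnInterval (g ∘ f) a b := by
  unfold AbsolutelyContinuousOnInterval at *
  refine squeeze_zero' (Eventually.of_forall fun _ => Finset.sum_nonneg fun _ _ => dist_nonneg)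
    ?_ (by simpa using hf.const_mul (K : ℝ))
  filter_upwards [mem_inf_of_right (mem_principal_self _)] with E hE
  rw [Finset.mul_sum]
  gcongr with i hi
  exact hg.dist_le_mul _ (hfs (hE.1 i hi).1) _ (hfs (hE.1 i hi).2)

theorem Real.lipschitzOnWith_log_Ici {m : ℝ} (hm : 0 < m) :
    LipschitzOnWith (Real.toNNReal m⁻¹) Real.log (Ici m) := by
  refine (convex_Ici m).lipschitzOnWith_of_nnnorm_hasDerivWithin_le
    (fun x hx => (Real.hasDerivAt_log (hm.trans_le hx).ne').hasDerivWithinAt) fun x hx => ?_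
  rw [← NNReal.coe_le_coe, coe_nnnorm, Real.norm_eq_abs, abs_inv,
    abs_of_pos (hm.trans_le hx), Real.coe_toNNReal _ (inv_nonneg.2 hm.le)]
  exact inv_anti₀ hm hx

theorem IntervalIntegrable.div_continuousOn {f g : ℝ → ℝ} {a b : ℝ}
    (hf : IntervalIntegrable f volume a b) (hg : ContinuousOn g (uIcc a b))
    (hg0 : ∀ t ∈ uIcc a b, g t ≠ 0) : IntervalIntegrable (fun t => f t / g t) volume a b := by
  simpa only [div_eq_mul_inv, Pi.inv_apply] using hf.mul_continuousOn (hg.inv₀ hg0)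

theorem Real.log_sub_log_eq_integral_div {y f : ℝ → ℝ} {a b : ℝ}
    (hf : IntervalIntegrable f volume a b)
    (hy : ∀ t ∈ uIcc a b, y t = y a + ∫ s in a..t, f s) (hpos : ∀ t ∈ uIcc a b, 0 < y t) :
    Real.log (y b) - Real.log (y a) = ∫ t in a..b, f t / y t := by
  have hFac : AbsolutelyContinuousOnInterval (fun t => y a + ∫ s in a..t, f s) a b := by
    have := hf.absolutelyContinuousOnInterval_intervalIntegral (c := a) left_mem_uIcc
    simpa only [AbsolutelyContinuousOnInterval, dist_add_left] using this
  have hFpos : ∀ t ∈ uIcc a b, 0 < y a + ∫ s in a..t, f s := fun t ht => hy t ht ▸ hpos t ht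
  obtain ⟨t₀, ht₀, hmin⟩ := isCompact_uIcc.exists_isMinOn nonempty_uIcc hFac.continuousOn
  have hlogF := ((Real.lipschitzOnWith_log_Ici (hFpos t₀ ht₀)).comp_absolutelyContinuousOnInterval
    hFac fun t ht => hmin ht).integral_deriv_eq_sub
  simp only [Function.comp_def, intervalIntegral.integral_same, add_zero, ← hy b right_mem_uIcc]
    at hlogF
  rw [← hlogF]
  refine intervalIntegral.integral_congr_ae ?_
  filter_upwards [hf.ae_hasDerivAt_integral] with t ht htab
  have htab' := uIoc_subset_uIcc htab
  rw [hy t htab']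
  exact (((ht htab' a left_mem_uIcc).const_add (y a)).log (hFpos t htab').ne').deriv

theorem Real.two_mul_sqrt_mul_le_add {x y : ℝ} (hx : 0 ≤ x) (hy : 0 ≤ y) :
    2 * √(x * y) ≤ x + y := by
  nlinarith [sq_nonneg (√x - √y), Real.sq_sqrt hx, Real.sq_sqrt hy, Real.sqrt_mul hx y]

theorem Finset.sum_sum_eq_sum_diag_add_sum_lt {ι M : Type*} [Fintype ι] [LinearOrder ι]
    [AddCommMonoid M] (c : ι → ι → M) :
    ∑ i, ∑ j, c i j = ∑ i, c i i +
      ∑ p ∈ univ.filter (fun p : ι × ι => p.1 < p.2), (c p.1 p.2 + c p.2 p.1) := by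
  have hswap : ∑ p ∈ univ.filter (fun p : ι × ι => p.1 < p.2), c p.2 p.1 =
      ∑ p ∈ univ.filter (fun p : ι × ι => p.2 < p.1), c p.1 p.2 :=
    Finset.sum_equiv (Equiv.prodComm ι ι) (by simp) (by simp)
  rw [sum_add_distrib, hswap, sum_filter, sum_filter, Fintype.sum_prod_type,
    Fintype.sum_prod_type, ← sum_add_distrib, ← sum_add_distrib]
  refine sum_congr rfl fun i _ => ?_
  rw [show c i i = ∑ j, if i = j then c i j else 0 by simp, ← sum_add_distrib,
    ← sum_add_distrib]
  refine sum_congr rfl fun j _ => ?_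
  rcases lt_trichotomy i j with h | rfl | h
  · simp [h, h.ne, h.not_gt]
  · simp
  · simp [h, h.ne', h.not_gt]

theorem IntervalIntegrable.sqrt_mul {f g : ℝ → ℝ} {a b : ℝ}
    (hf : IntervalIntegrable f volume a b) (hg : IntervalIntegrable g volume a b) :
    IntervalIntegrable (fun t => √(f t * g t)) volume a b := by
  refine ((hf.abs.add hg.abs).div_const 2).mono_fun'
    (Real.continuous_sqrt.comp_aestronglyMeasurable
      (hf.def'.aestronglyMeasurable.mul hg.def'.aestronglyMeasurable))
    (Eventually.of_forall fun t => ?_)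
  have := Real.two_mul_sqrt_mul_le_add (abs_nonneg (f t)) (abs_nonneg (g t))
  have := Real.sqrt_le_sqrt ((le_abs_self (f t * g t)).trans_eq (abs_mul _ _))
  simp only [Real.norm_eq_abs, abs_of_nonneg (Real.sqrt_nonneg _)]
  linarith

namespace Matrix

variable {ι : Type*} [Fintype ι]

theorem diag_mul_le_mulVec {M : Matrix ι ι ℝ} (hM : ∀ i j, i ≠ j → 0 ≤ M i j) {v : ι → ℝ}
    (hv : ∀ i, 0 ≤ v i) (i : ι) : M i i * v i ≤ (M *ᵥ v) i := by
  classical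
  rw [mulVec, dotProduct, ← Finset.add_sum_erase _ _ (Finset.mem_univ i)]
  exact le_add_of_nonneg_right (Finset.sum_nonneg fun j hj =>
    mul_nonneg (hM i j (Finset.ne_of_mem_erase hj).symm) (hv j))

variable [LinearOrder ι]

noncomputable def kolotilinaBound (M : Matrix ι ι ℝ) : ℝ :=
  M.trace + 2 * ∑ p ∈ Finset.univ.filter (fun p : ι × ι => p.1 < p.2), √(M p.1 p.2 * M p.2 p.1)

theorem kolotilinaBound_le_sum_mulVec_div {M : Matrix ι ι ℝ} (hM : ∀ i j, i ≠ j → 0 ≤ M i j)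
    {v : ι → ℝ} (hv : ∀ i, 0 < v i) : M.kolotilinaBound ≤ ∑ i, (M *ᵥ v) i / v i := by
  simp only [mulVec, dotProduct, Finset.sum_div]
  rw [Finset.sum_sum_eq_sum_diag_add_sum_lt, kolotilinaBound, trace, Finset.mul_sum]
  have hdiag : ∀ i, M i i * v i / v i = M i i := fun i => by field_simp [(hv i).ne']
  simp only [hdiag, diag_apply]
  gcongr with p hp
  have hlt := (Finset.mem_filter.1 hp).2
  have hprod : M p.1 p.2 * M p.2 p.1 =
      M p.1 p.2 * v p.2 / v p.1 * (M p.2 p.1 * v p.1 / v p.2) := by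
    field_simp [(hv p.1).ne', (hv p.2).ne']
  rw [hprod]
  exact Real.two_mul_sqrt_mul_le_add
    (div_nonneg (mul_nonneg (hM _ _ hlt.ne) (hv _).le) (hv _).le)
    (div_nonneg (mul_nonneg (hM _ _ hlt.ne') (hv _).le) (hv _).le)

end Matrix

section Cooperative

variable {ι : Type*} [Fintype ι] {A : ℝ → Matrix ι ι ℝ} {x : ℝ → ι → ℝ} {a b : ℝ}

theorem intervalIntegrable_mulVec_apply
    (hA : ∀ i j, IntervalIntegrable (fun t => A t i j) volume a b)
    (hx : ∀ j, ContinuousOn (fun t => x t j) (uIcc a b)) (i : ι) :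
    IntervalIntegrable (fun t => (A t *ᵥ x t) i) volume a b := by
  simpa only [Matrix.mulVec, dotProduct, Finset.sum_fn] using
    IntervalIntegrable.sum Finset.univ fun j _ => (hA i j).mul_continuousOn (hx j)

theorem log_sub_log_eq_integral_mulVec_div (hab : a ≤ b)
    (hA : ∀ i j, IntervalIntegrable (fun t => A t i j) volume a b)
    (hx : ∀ j, ContinuousOn (fun t => x t j) (Icc a b))
    (hsol : ∀ t ∈ Icc a b, ∀ i, x t i = x a i + ∫ τ in a..t, (A τ *ᵥ x τ) i)
    (hpos : ∀ t ∈ Icc a b, ∀ i, 0 < x t i) (i : ι) :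
    Real.log (x b i) - Real.log (x a i) = ∫ τ in a..b, (A τ *ᵥ x τ) i / x τ i := by
  rw [← uIcc_of_le hab] at hx hsol hpos
  exact Real.log_sub_log_eq_integral_div (intervalIntegrable_mulVec_apply hA hx i)
    (fun t ht => hsol t ht i) fun t ht => hpos t ht i

theorem mul_exp_neg_integral_abs_le (hab : a ≤ b)
    (hA : ∀ i j, IntervalIntegrable (fun t => A t i j) volume a b)
    (hML : ∀ t ∈ Icc a b, ∀ i j, i ≠ j → 0 ≤ A t i j)
    (hx : ∀ j, ContinuousOn (fun t => x t j) (Icc a b))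
    (hsol : ∀ t ∈ Icc a b, ∀ i, x t i = x a i + ∫ τ in a..t, (A τ *ᵥ x τ) i)
    {u : ℝ} (hu : u ∈ Icc a b) (hpos : ∀ t ∈ Icc a u, ∀ i, 0 < x t i) (i : ι) :
    x a i * Real.exp (-∫ τ in a..b, |A τ i i|) ≤ x u i := by
  have hsub : Icc a u ⊆ Icc a b := Icc_subset_Icc le_rfl hu.2
  have hA' : ∀ i j, IntervalIntegrable (fun t => A t i j) volume a u := fun i j =>
    (hA i j).mono_set (by simpa only [uIcc_of_le hu.1, uIcc_of_le hab] using hsub)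
  have hx' : ∀ j, ContinuousOn (fun t => x t j) (Icc a u) := fun j => (hx j).mono hsub
  have hx'' : ∀ j, ContinuousOn (fun t => x t j) (uIcc a u) := by rwa [uIcc_of_le hu.1]
  have hlog := log_sub_log_eq_integral_mulVec_div hu.1 hA' hx'
    (fun t ht => hsol t (hsub ht)) hpos i
  have hdiag : ∫ τ in a..u, A τ i i ≤ ∫ τ in a..u, (A τ *ᵥ x τ) i / x τ i :=
    intervalIntegral.integral_mono_on hu.1 (hA' i i)
      ((intervalIntegrable_mulVec_apply hA' hx'' i).div_continuousOn (hx'' i)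
        fun t ht => (hpos t (uIcc_of_le hu.1 ▸ ht) i).ne')
      fun τ hτ => (le_div_iff₀ (hpos τ hτ i)).2
        (Matrix.diag_mul_le_mulVec (hML τ (hsub hτ)) (fun j => (hpos τ hτ j).le) i)
  have habs : -∫ τ in a..b, |A τ i i| ≤ ∫ τ in a..u, A τ i i := by
    have := intervalIntegral.integral_mono_interval le_rfl hu.1 hu.2
      (Eventually.of_forall fun τ => abs_nonneg (A τ i i)) (hA i i).abs
    linarith [neg_abs_le (∫ τ in a..u, A τ i i),
      intervalIntegral.abs_integral_le_integral_abs (f := fun τ => A τ i i) (μ := volume) hu.1]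
  calc x a i * Real.exp (-∫ τ in a..b, |A τ i i|)
      = Real.exp (Real.log (x a i) + -∫ τ in a..b, |A τ i i|) := by
        rw [Real.exp_add, Real.exp_log (hpos a (left_mem_Icc.2 hu.1) i)]
    _ ≤ Real.exp (Real.log (x u i)) := Real.exp_le_exp.2 (by linarith)
    _ = x u i := Real.exp_log (hpos u (right_mem_Icc.2 hu.1) i)

theorem pos_of_cooperative_solution (hab : a ≤ b)
    (hA : ∀ i j, IntervalIntegrable (fun t => A t i j) volume a b)
    (hML : ∀ t ∈ Icc a b, ∀ i j, i ≠ j → 0 ≤ A t i j)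
    (hx : ∀ j, ContinuousOn (fun t => x t j) (Icc a b))
    (hsol : ∀ t ∈ Icc a b, ∀ i, x t i = x a i + ∫ τ in a..t, (A τ *ᵥ x τ) i)
    (hpos : ∀ i, 0 < x a i) : ∀ t ∈ Icc a b, ∀ i, 0 < x t i := by
  by_contra! hneg
  -- `T` is the first time a coordinate vanishes; up to `T` the diagonal bound keeps `xᵢ` away
  -- from `0`, and continuity carries this bound to `T` itself.
  set Z := ⋃ i, Icc a b ∩ (fun t => x t i) ⁻¹' Iic 0
  have hZne : Z.Nonempty := by
    obtain ⟨t, ht, i, hi⟩ := hneg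
    exact ⟨t, mem_iUnion.2 ⟨i, ht, hi⟩⟩
  have hZclosed : IsClosed Z := isClosed_iUnion_of_finite fun i =>
    (hx i).preimage_isClosed_of_isClosed isClosed_Icc isClosed_Iic
  obtain ⟨T, hTZ, hTmin⟩ : ∃ T, IsLeast Z T := ⟨_, hZclosed.isLeast_csInf hZne
    ⟨a, fun t ht => (mem_iUnion.1 ht).elim fun _ h => h.1.1⟩⟩
  obtain ⟨i, hTab, hi⟩ := mem_iUnion.1 hTZ
  have haT : a < T := hTab.1.lt_of_ne fun h => (hpos i).not_ge (h ▸ hi)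
  have hposT : ∀ t ∈ Ico a T, ∀ j, 0 < x t j := fun t ht j => by
    by_contra! h
    exact ht.2.not_ge (hTmin (mem_iUnion.2 ⟨j, ⟨ht.1, ht.2.le.trans hTab.2⟩, h⟩))
  have hbound : ∀ u ∈ Ico a T, x a i * Real.exp (-∫ τ in a..b, |A τ i i|) ≤ x u i :=
    fun u hu => mul_exp_neg_integral_abs_le hab hA hML hx hsol
      ⟨hu.1, hu.2.le.trans hTab.2⟩ (fun t ht => hposT t ⟨ht.1, ht.2.trans_lt hu.2⟩) i
  have hclosure : closure (Ico a T) ⊆ Icc a b := by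
    rw [closure_Ico haT.ne]
    exact Icc_subset_Icc le_rfl hTab.2
  have := le_on_closure hbound continuousOn_const ((hx i).mono hclosure)
    (closure_Ico haT.ne ▸ right_mem_Icc.2 haT.le)
  exact (mul_pos (hpos i) (Real.exp_pos _)).not_ge (this.trans hi)

theorem intervalIntegrable_kolotilinaBound [LinearOrder ι]
    (hA : ∀ i j, IntervalIntegrable (fun t => A t i j) volume a b) :
    IntervalIntegrable (fun t => (A t).kolotilinaBound) volume a b := by
  have htrace := IntervalIntegrable.sum Finset.univ fun i _ => hA i i
  have hsqrt := IntervalIntegrable.sum (Finset.univ.filter fun p : ι × ι => p.1 < p.2)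
    fun p _ => (hA p.1 p.2).sqrt_mul (hA p.2 p.1)
  simpa only [Matrix.kolotilinaBound, Matrix.trace, Matrix.diag, Finset.sum_fn] using
    htrace.add (hsqrt.const_mul 2)

theorem exp_integral_kolotilinaBound_mul_prod_le [LinearOrder ι] (hab : a ≤ b)
    (hA : ∀ i j, IntervalIntegrable (fun t => A t i j) volume a b)
    (hML : ∀ t ∈ Icc a b, ∀ i j, i ≠ j → 0 ≤ A t i j)
    (hx : ∀ j, ContinuousOn (fun t => x t j) (Icc a b))
    (hsol : ∀ t ∈ Icc a b, ∀ i, x t i = x a i + ∫ τ in a..t, (A τ *ᵥ x τ) i)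
    (hpos : ∀ i, 0 < x a i) :
    Real.exp (∫ τ in a..b, (A τ).kolotilinaBound) * ∏ i, x a i ≤ ∏ i, x b i := by
  have hxpos := pos_of_cooperative_solution hab hA hML hx hsol hpos
  have hprod : ∀ t ∈ Icc a b, 0 < ∏ i, x t i := fun t ht =>
    Finset.prod_pos fun i _ => hxpos t ht i
  have hx' : ∀ j, ContinuousOn (fun t => x t j) (uIcc a b) := by rwa [uIcc_of_le hab]
  have hquot : ∀ i, IntervalIntegrable (fun τ => (A τ *ᵥ x τ) i / x τ i) volume a b := fun i =>
    (intervalIntegrable_mulVec_apply hA hx' i).div_continuousOn (hx' i)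
      fun t ht => (hxpos t (uIcc_of_le hab ▸ ht) i).ne'
  have hlog : Real.log (∏ i, x b i) - Real.log (∏ i, x a i) =
      ∫ τ in a..b, ∑ i, (A τ *ᵥ x τ) i / x τ i := by
    rw [Real.log_prod fun i _ => (hxpos b (right_mem_Icc.2 hab) i).ne',
      Real.log_prod fun i _ => (hpos i).ne', ← Finset.sum_sub_distrib,
      intervalIntegral.integral_finsetSum fun i _ => hquot i]
    exact Finset.sum_congr rfl fun i _ =>
      log_sub_log_eq_integral_mulVec_div hab hA hx hsol hxpos i
  have hle : ∫ τ in a..b, (A τ).kolotilinaBound ≤ ∫ τ in a..b, ∑ i, (A τ *ᵥ x τ) i / x τ i :=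
    intervalIntegral.integral_mono_on hab (intervalIntegrable_kolotilinaBound hA)
      (by simpa only [Finset.sum_fn] using IntervalIntegrable.sum Finset.univ fun i _ => hquot i)
      fun τ hτ => Matrix.kolotilinaBound_le_sum_mulVec_div (hML τ hτ) (hxpos τ hτ)
  rw [← le_div_iff₀ (hprod a (left_mem_Icc.2 hab)),
    ← Real.exp_log (hprod b (right_mem_Icc.2 hab)), ← Real.exp_log (hprod a (left_mem_Icc.2 hab)), ← Real.exp_sub]
  exact Real.exp_le_exp.2 (hlog ▸ hle)

end Cooperative

/-- Basic Kolotilina-type product estimate for cooperative linear ODE systems. -/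
theorem stmt2 {N : ℕ} {α β t₀ : ℝ} (ht₀ : t₀ ∈ Set.Ioo α β)
    (A : ℝ → Matrix (Fin N) (Fin N) ℝ)
    (hint : ∀ i j, MeasureTheory.LocallyIntegrableOn (fun t => A t i j) (Set.Ioo α β))
    (hML : ∀ t ∈ Set.Ioo α β, ∀ i j, i ≠ j → 0 ≤ A t i j)
    (x : ℝ → Fin N → ℝ)
    (hcont : ∀ i, ContinuousOn (fun t => x t i) (Set.Ioo α β))
    (hsol : ∀ t ∈ Set.Ioo α β, ∀ i,
      x t i = x t₀ i + ∫ τ in t₀..t, ∑ j, A τ i j * x τ j)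
    (hpos : ∀ i, 0 < x t₀ i) :
    ∀ t ∈ Set.Ioo t₀ β,
      ∏ i, x t i ≥
        Real.exp (∫ τ in t₀..t,
          (Matrix.trace (A τ) +
            2 * ∑ p ∈ Finset.univ.filter (fun p : Fin N × Fin N => p.1 < p.2),
              Real.sqrt (A τ p.1 p.2 * A τ p.2 p.1))) * ∏ i, x t₀ i := by
  intro t ht
  have hsub : Icc t₀ t ⊆ Ioo α β := Icc_subset_Ioo ht₀.1 ht.2
  have hA : ∀ i j, IntervalIntegrable (fun τ => A τ i j) volume t₀ t := fun i j =>
    (intervalIntegrable_iff_integrableOn_Icc_of_le ht.1.le).2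
      ((hint i j).integrableOn_compact_subset hsub isCompact_Icc)
  exact exp_integral_kolotilinaBound_mul_prod_le ht.1.le hA (fun τ hτ => hML τ (hsub hτ))
    (fun j => (hcont j).mono hsub) (fun τ hτ => hsol τ (hsub hτ)) hpos
end

section
/- Let A ∈ ℝ^{N×N} be an ML-matrix. Then the dominant eigenvalue d(A) satisfies d(A) ≥ (1/N)(tr A + 2 ∑_{j<k} √(a_{jk} a_{kj})). -/
/-!
Shift `A` by `c • 1`, with `c` large, to a nonnegative matrix `Q`, and let `B = geomSymm Q`,
`B i j = √(Q i j * Q j i)`. Cauchy–Schwarz over the intermediate index gives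
`(B ^ k) i j ≤ √((Q ^ k) i j * (Q ^ k) j i)`, hence `tr (B ^ k) ≤ tr (Q ^ k) ≤ N ρ(Q) ^ k`.
Since `B` is symmetric and nonnegative, Cauchy–Schwarz on row sums gives
`(1ᵀ B 1 / N) ^ 2 ^ m ≤ tr (B ^ 2 ^ m)`, so `1ᵀ B 1 / N ≤ ρ(Q)`. Here
`1ᵀ B 1 = tr A + N c + 2 ∑_{j<k} √(a_jk a_kj)`. If `M` bounds the spectrum of `A`, an eigenvalue
`μ + c` of `Q` satisfies `‖μ + c‖² = ‖μ‖² + 2 c Re μ + c² ≤ c² + 2 c d + M²`; so the right-hand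
side `w` of the estimate satisfies `w + c ≤ √(c² + 2 c d + M²)` for all large `c`, which forces
`w ≤ d`.
-/

open Finset

lemma sum_sum_eq_sum_diag_add_two_mul_sum_lt {ι : Type*} [Fintype ι] [LinearOrder ι]
    (f : ι → ι → ℝ) (hf : ∀ i j, f i j = f j i) :
    ∑ i, ∑ j, f i j =
      ∑ i, f i i + 2 * ∑ p ∈ univ.filter (fun p : ι × ι => p.1 < p.2), f p.1 p.2 := by
  have hdiag : ∑ p ∈ univ.filter (fun p : ι × ι => ¬p.1 < p.2 ∧ p.1 = p.2), f p.1 p.2 =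
      ∑ i, f i i := by
    rw [filter_congr fun p _ => and_iff_right_of_imp fun h => h.not_lt, sum_filter,
      Fintype.sum_prod_type]
    exact sum_congr rfl fun i _ => Fintype.sum_ite_eq i (f i)
  have hswap : ∑ p ∈ univ.filter (fun p : ι × ι => ¬p.1 < p.2 ∧ ¬p.1 = p.2), f p.1 p.2 =
      ∑ p ∈ univ.filter (fun p : ι × ι => p.1 < p.2), f p.1 p.2 := by
    rw [filter_congr fun p _ => by rw [← not_or, ← le_iff_lt_or_eq, not_le]]
    exact sum_nbij' Prod.swap Prod.swap (by simp) (by simp) (by simp) (by simp) fun p _ => hf _ _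
  rw [← Fintype.sum_prod_type', ← sum_filter_add_sum_filter_not univ (fun p : ι × ι => p.1 < p.2),
    ← sum_filter_add_sum_filter_not (univ.filter fun p : ι × ι => ¬p.1 < p.2)
      (fun p => p.1 = p.2), filter_filter, filter_filter, hdiag, hswap]
  ring

open Filter Topology in
lemma le_of_pow_le_mul_pow {r R C : ℝ} (hR : 0 ≤ R) {k : ℕ → ℕ} (hk : Tendsto k atTop atTop)
    (h : ∀ m, r ^ k m ≤ C * R ^ k m) : r ≤ R := by
  by_contra! hRr
  have hr : 0 < r := hR.trans_lt hRr
  have hlim : Tendsto (fun m => C * (R / r) ^ k m) atTop (𝓝 0) := by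
    simpa using ((tendsto_pow_atTop_nhds_zero_of_lt_one (div_nonneg hR hr.le)
      ((div_lt_one hr).2 hRr)).comp hk).const_mul C
  obtain ⟨m, hm⟩ := (hlim.eventually (gt_mem_nhds one_pos)).exists
  rw [div_pow, ← mul_div_assoc, div_lt_one (pow_pos hr _)] at hm
  linarith [h m]

lemma le_of_forall_add_le_sqrt {w d M c₀ : ℝ} (h : ∀ c ≥ c₀, w + c ≤ √(c ^ 2 + 2 * c * d + M)) :
    w ≤ d := by
  by_contra! hdw
  obtain ⟨c, hc₀, hcw, hcM⟩ : ∃ c ≥ c₀, 1 - w ≤ c ∧ (M - w ^ 2) / (2 * (w - d)) < c :=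
    ⟨max c₀ (max (1 - w) ((M - w ^ 2) / (2 * (w - d)) + 1)), le_max_left _ _,
      (le_max_left _ _).trans (le_max_right _ _),
      (lt_add_one _).trans_le ((le_max_right _ _).trans (le_max_right _ _))⟩
  have hsq := (Real.le_sqrt' (by linarith)).1 (h c hc₀)
  have hMc := (div_lt_iff₀ (by linarith)).1 hcM
  nlinarith

namespace Matrix

noncomputable def geomSymm {ι : Type*} (Q : Matrix ι ι ℝ) : Matrix ι ι ℝ :=
  of fun i j => √(Q i j * Q j i)

lemma isSymm_geomSymm {ι : Type*} (Q : Matrix ι ι ℝ) : (geomSymm Q).IsSymm :=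
  IsSymm.ext fun i j => by simp only [geomSymm, of_apply, mul_comm]

variable {ι : Type*} [Fintype ι] [DecidableEq ι]

lemma geomSymm_pow_apply_le {Q : Matrix ι ι ℝ} (hQ : ∀ i j, 0 ≤ Q i j) (k : ℕ) (i j : ι) :
    (geomSymm Q ^ k) i j ≤ √((Q ^ k) i j * (Q ^ k) j i) := by
  induction k generalizing j with
  | zero => by_cases h : i = j <;> simp [one_apply, h]
  | succ k ih =>
    have hQk := pow_apply_nonneg hQ k
    calc (geomSymm Q ^ (k + 1)) i j = ∑ l, (geomSymm Q ^ k) i l * geomSymm Q l j := by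
          rw [pow_succ, mul_apply]
      _ ≤ ∑ l, √((Q ^ k) i l * (Q ^ k) l i) * √(Q l j * Q j l) := by
          gcongr with l
          · exact Real.sqrt_nonneg _
          · exact ih l
          · rfl
      _ = ∑ l, √((Q ^ k) i l * Q l j) * √((Q ^ k) l i * Q j l) := by
          refine sum_congr rfl fun l _ => ?_
          rw [← Real.sqrt_mul (mul_nonneg (hQk i l) (hQk l i)),
            ← Real.sqrt_mul (mul_nonneg (hQk i l) (hQ l j))]
          ring_nf
      _ ≤ √(∑ l, (Q ^ k) i l * Q l j) * √(∑ l, (Q ^ k) l i * Q j l) :=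
          Real.sum_sqrt_mul_sqrt_le _ (fun l => mul_nonneg (hQk i l) (hQ l j))
            (fun l => mul_nonneg (hQk l i) (hQ j l))
      _ = √((Q ^ (k + 1)) i j * (Q ^ (k + 1)) j i) := by
          rw [← Real.sqrt_mul (sum_nonneg fun l _ => mul_nonneg (hQk i l) (hQ l j)), pow_succ,
            mul_apply, ← pow_succ, pow_succ', mul_apply]
          simp only [mul_comm (Q j _)]

lemma trace_geomSymm_pow_le {Q : Matrix ι ι ℝ} (hQ : ∀ i j, 0 ≤ Q i j) (k : ℕ) :
    trace (geomSymm Q ^ k) ≤ trace (Q ^ k) := by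
  refine sum_le_sum fun i _ => ?_
  simpa [Real.sqrt_mul_self (pow_apply_nonneg hQ k i i)] using geomSymm_pow_apply_le hQ k i i

section Symmetric

variable {S : Matrix ι ι ℝ}

lemma IsSymm.sum_sum_pow_two_mul (hS : S.IsSymm) (k : ℕ) :
    ∑ i, ∑ j, (S ^ (2 * k)) i j = ∑ l, (∑ j, (S ^ k) l j) ^ 2 := by
  simp only [two_mul, pow_add, mul_apply, sq, sum_mul_sum]
  rw [sum_congr rfl fun i _ => sum_comm, sum_comm]
  refine sum_congr rfl fun l _ => sum_congr rfl fun i _ => ?_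
  rw [(hS.pow k).apply]

lemma IsSymm.trace_pow_two_mul (hS : S.IsSymm) (k : ℕ) :
    trace (S ^ (2 * k)) = ∑ l, ∑ j, (S ^ k) l j ^ 2 := by
  simp only [two_mul, pow_add, trace, diag_apply, mul_apply, sq, (hS.pow k).apply]

lemma IsSymm.sq_sum_sum_pow_le (hS : S.IsSymm) (k : ℕ) :
    (∑ i, ∑ j, (S ^ k) i j) ^ 2 ≤ Fintype.card ι * ∑ i, ∑ j, (S ^ (2 * k)) i j := by
  rw [hS.sum_sum_pow_two_mul]
  exact sq_sum_le_card_mul_sum_sq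

lemma IsSymm.sum_sum_pow_two_mul_le (hS : S.IsSymm) (k : ℕ) :
    ∑ i, ∑ j, (S ^ (2 * k)) i j ≤ Fintype.card ι * trace (S ^ (2 * k)) := by
  rw [hS.sum_sum_pow_two_mul, hS.trace_pow_two_mul, mul_sum]
  exact sum_le_sum fun l _ => sq_sum_le_card_mul_sum_sq

lemma IsSymm.pow_sum_sum_div_card_le_trace [Nonempty ι] (hS : S.IsSymm) (hS₀ : ∀ i j, 0 ≤ S i j)
    (m : ℕ) : ((∑ i, ∑ j, S i j) / Fintype.card ι) ^ 2 ^ (m + 1) ≤ trace (S ^ 2 ^ (m + 1)) := by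
  have hn : (0 : ℝ) < Fintype.card ι := Nat.cast_pos.mpr Fintype.card_pos
  have hmean : ∀ m : ℕ, ((∑ i, ∑ j, S i j) / Fintype.card ι) ^ 2 ^ m ≤
      (∑ i, ∑ j, (S ^ 2 ^ m) i j) / Fintype.card ι := by
    intro m
    induction m with
    | zero => simp
    | succ m ih =>
      have h₀ : 0 ≤ (∑ i, ∑ j, S i j) / Fintype.card ι :=
        div_nonneg (sum_nonneg fun i _ => sum_nonneg fun j _ => hS₀ i j) hn.le
      calc ((∑ i, ∑ j, S i j) / Fintype.card ι) ^ 2 ^ (m + 1)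
          = (((∑ i, ∑ j, S i j) / Fintype.card ι) ^ 2 ^ m) ^ 2 := by rw [pow_succ, pow_mul]
        _ ≤ ((∑ i, ∑ j, (S ^ 2 ^ m) i j) / Fintype.card ι) ^ 2 :=
          pow_le_pow_left₀ (pow_nonneg h₀ _) ih 2
        _ ≤ (∑ i, ∑ j, (S ^ (2 * 2 ^ m)) i j) / Fintype.card ι := by
          rw [div_pow, sq (Fintype.card ι : ℝ), ← div_div, div_le_div_iff_of_pos_right hn,
            div_le_iff₀' hn]
          exact hS.sq_sum_sum_pow_le _
        _ = (∑ i, ∑ j, (S ^ 2 ^ (m + 1)) i j) / Fintype.card ι := by rw [pow_succ']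
  calc ((∑ i, ∑ j, S i j) / Fintype.card ι) ^ 2 ^ (m + 1)
      ≤ (∑ i, ∑ j, (S ^ (2 * 2 ^ m)) i j) / Fintype.card ι := by
        rw [← pow_succ']; exact hmean (m + 1)
    _ ≤ trace (S ^ 2 ^ (m + 1)) := by
        rw [div_le_iff₀' hn, pow_succ']
        exact hS.sum_sum_pow_two_mul_le _

end Symmetric

lemma norm_trace_le_card_mul {X : Matrix ι ι ℂ} {r : ℝ} (h : ∀ z ∈ spectrum ℂ X, ‖z‖ ≤ r) :
    ‖trace X‖ ≤ Fintype.card ι * r := by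
  rw [trace_eq_sum_roots_charpoly]
  calc ‖X.charpoly.roots.sum‖ ≤ (X.charpoly.roots.map (‖·‖)).sum := norm_multiset_sum_le _
    _ ≤ (X.charpoly.roots.map (‖·‖)).card • r := by
        refine Multiset.sum_le_card_nsmul _ _ fun x hx => ?_
        obtain ⟨z, hz, rfl⟩ := Multiset.mem_map.1 hx
        exact h z (mem_spectrum_iff_isRoot_charpoly.2 (Polynomial.isRoot_of_mem_roots hz))
    _ = Fintype.card ι * r := by
        rw [Multiset.card_map, ← (IsAlgClosed.splits _).natDegree_eq_card_roots,
          charpoly_natDegree_eq_dim, nsmul_eq_mul]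

lemma trace_pow_le_card_mul_pow {Q : Matrix ι ι ℝ} {R : ℝ}
    (hR : ∀ z ∈ spectrum ℂ (Q.map (fun r => (r : ℂ))), ‖z‖ ≤ R) {k : ℕ} (hk : 0 < k) :
    trace (Q ^ k) ≤ Fintype.card ι * R ^ k := by
  have hcast : ((trace (Q ^ k) : ℝ) : ℂ) = trace (Q.map (fun r => (r : ℂ)) ^ k) :=
    (AddMonoidHom.map_trace Complex.ofRealHom.toAddMonoidHom _).trans
      (congrArg trace (map_pow Complex.ofRealHom.mapMatrix Q k))
  calc trace (Q ^ k) ≤ ‖((trace (Q ^ k) : ℝ) : ℂ)‖ := by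
        rw [Complex.norm_real]; exact Real.le_norm_self _
    _ = ‖trace (Q.map (fun r => (r : ℂ)) ^ k)‖ := by rw [hcast]
    _ ≤ Fintype.card ι * R ^ k := norm_trace_le_card_mul fun z hz => ?_
  rw [spectrum.map_pow_of_pos _ hk] at hz
  obtain ⟨μ, hμ, rfl⟩ := hz
  rw [norm_pow]
  exact pow_le_pow_left₀ (norm_nonneg _) (hR μ hμ) k

open Filter in
theorem sum_geomSymm_div_card_le {Q : Matrix ι ι ℝ} (hQ : ∀ i j, 0 ≤ Q i j) {R : ℝ} (hR₀ : 0 ≤ R)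
    (hR : ∀ z ∈ spectrum ℂ (Q.map (fun r => (r : ℂ))), ‖z‖ ≤ R) :
    (∑ i, ∑ j, geomSymm Q i j) / Fintype.card ι ≤ R := by
  rcases isEmpty_or_nonempty ι with hι | hι
  · simpa using hR₀
  refine le_of_pow_le_mul_pow hR₀ (k := fun m => 2 ^ (m + 1)) (C := Fintype.card ι) ?_ fun m => ?_
  · exact (tendsto_pow_atTop_atTop_of_one_lt one_lt_two).comp (tendsto_add_atTop_nat 1)
  calc ((∑ i, ∑ j, geomSymm Q i j) / Fintype.card ι) ^ 2 ^ (m + 1)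
      ≤ trace (geomSymm Q ^ 2 ^ (m + 1)) :=
        (isSymm_geomSymm Q).pow_sum_sum_div_card_le_trace (fun _ _ => Real.sqrt_nonneg _) m
    _ ≤ trace (Q ^ 2 ^ (m + 1)) := trace_geomSymm_pow_le hQ _
    _ ≤ Fintype.card ι * R ^ 2 ^ (m + 1) := trace_pow_le_card_mul_pow hR (by positivity)

lemma norm_le_of_mem_spectrum_add_smul_one {A : Matrix ι ι ℝ} {c d M : ℝ} (hc : 0 ≤ c)
    (hdom : ∀ μ ∈ spectrum ℂ (A.map (fun r => (r : ℂ))), μ.re ≤ d)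
    (hM : ∀ μ ∈ spectrum ℂ (A.map (fun r => (r : ℂ))), ‖μ‖ ≤ M) :
    ∀ z ∈ spectrum ℂ ((A + c • 1).map (fun r => (r : ℂ))),
      ‖z‖ ≤ √(c ^ 2 + 2 * c * d + M ^ 2) := by
  have hmap : (A + c • 1).map (fun r => (r : ℂ)) =
      algebraMap ℂ _ (c : ℂ) + A.map (fun r => (r : ℂ)) := by
    ext i j
    by_cases h : i = j <;> simp [h, algebraMap_eq_diagonal, add_comm]
  intro z hz
  obtain ⟨μ, hμ, rfl⟩ : ∃ μ ∈ spectrum ℂ (A.map (fun r => (r : ℂ))), z = μ + c :=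
    ⟨z - c, by rwa [← spectrum.add_mem_add_iff, sub_add_cancel, ← hmap], by ring⟩
  have hnorm : ‖μ + c‖ ^ 2 = ‖μ‖ ^ 2 + 2 * c * μ.re + c ^ 2 := by
    simp only [← Complex.normSq_eq_norm_sq, Complex.normSq_apply, Complex.add_re,
      Complex.add_im, Complex.ofReal_re, Complex.ofReal_im]
    ring
  refine Real.le_sqrt_of_sq_le ?_
  have hμM : ‖μ‖ ^ 2 ≤ M ^ 2 := pow_le_pow_left₀ (norm_nonneg μ) (hM μ hμ) 2
  nlinarith [hdom μ hμ]

lemma sum_geomSymm_add_smul_one [LinearOrder ι] {A : Matrix ι ι ℝ} {c : ℝ}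
    (hc : ∀ i, 0 ≤ A i i + c) :
    ∑ i, ∑ j, geomSymm (A + c • 1) i j = trace A + Fintype.card ι * c +
      2 * ∑ p ∈ univ.filter (fun p : ι × ι => p.1 < p.2), √(A p.1 p.2 * A p.2 p.1) := by
  rw [sum_sum_eq_sum_diag_add_two_mul_sum_lt _ fun i j => (isSymm_geomSymm _).apply j i]
  congr 1
  · simp [geomSymm, Real.sqrt_mul_self (hc _), trace, sum_add_distrib]
  · refine congrArg (2 * ·) (sum_congr rfl fun p hp => ?_)
    have hlt := (mem_filter.1 hp).2
    simp [geomSymm, one_apply_ne hlt.ne, one_apply_ne hlt.ne']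

end Matrix

/-- Kolotilina's estimate: the dominant eigenvalue of an ML-matrix `A` satisfies
`d(A) ≥ (1/N)(tr A + 2 ∑_{j<k} √(a_{jk} a_{kj}))`. -/
theorem stmt4 {N : ℕ} (A : Matrix (Fin N) (Fin N) ℝ)
    (hML : ∀ i j, i ≠ j → 0 ≤ A i j) (d : ℝ)
    (hd : (d : ℂ) ∈ spectrum ℂ (A.map (fun r => (r : ℂ))))
    (hdom : ∀ μ ∈ spectrum ℂ (A.map (fun r => (r : ℂ))), μ.re ≤ d) :
    d ≥ (1 / (N : ℝ)) * (Matrix.trace A +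
      2 * ∑ p ∈ Finset.univ.filter (fun p : Fin N × Fin N => p.1 < p.2),
        Real.sqrt (A p.1 p.2 * A p.2 p.1)) := by
  have hN : (N : ℝ) ≠ 0 := by
    rintro hN
    obtain rfl : N = 0 := by exact_mod_cast hN
    simp [spectrum.of_subsingleton] at hd
  obtain ⟨M, hM⟩ := (A.map (fun r => (r : ℂ))).finite_spectrum.isBounded.subset_closedBall 0
  refine le_of_forall_add_le_sqrt (c₀ := ∑ i, |A i i|) (M := M ^ 2) fun c hc => ?_
  have hc₀ : 0 ≤ c := (sum_nonneg fun i _ => abs_nonneg _).trans hc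
  have hdiag : ∀ i, 0 ≤ A i i + c := fun i => by
    have := single_le_sum (fun j _ => abs_nonneg (A j j)) (mem_univ i)
    linarith [neg_abs_le (A i i)]
  have hQ : ∀ i j, 0 ≤ (A + c • 1) i j := by
    intro i j
    rcases eq_or_ne i j with rfl | h
    · simpa using hdiag i
    · simpa [Matrix.one_apply_ne h] using hML i j h
  have hspec := Matrix.norm_le_of_mem_spectrum_add_smul_one hc₀ hdom
    fun μ hμ => mem_closedBall_zero_iff.1 (hM hμ)
  have hmean := Matrix.sum_geomSymm_div_card_le hQ (Real.sqrt_nonneg _) hspec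
  rw [Matrix.sum_geomSymm_add_smul_one hdiag, Fintype.card_fin] at hmean
  convert hmean using 1
  field_simp
  ring
end

section
/- Let A ∈ ℝ^{N×N} be an ML-matrix. Then its dominant eigenvalue d(A) satisfies d(A) ≥ minᵢ ∑ⱼ a_{ij} (the minimum over rows of the row sums). -/
/-!
For large `t`, the shifted matrix `A + t` is nonnegative with row sums at least `m + t`, where
`m = minᵢ ∑ⱼ aᵢⱼ`; by Gelfand's formula for the ∞-operator norm its spectral radius is then at
least `m + t`, so some eigenvalue `μ` of `A` has `|μ + t| ≥ m + t`. If every eigenvalue had real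
part at most `d < m`, then `|μ + t|² = |μ|² + 2t Re μ + t² ≤ K² + 2td + t²`, with `K` bounding
the spectrum, and this is smaller than `(m + t)²` once `t` is large enough.
-/

open Filter
open scoped NNReal ENNReal

attribute [local instance] Matrix.linftyOpSeminormedAddCommGroup Matrix.linftyOpNormedRing
  Matrix.linftyOpNormedAlgebra

lemma le_spectralRadius_of_le_nnnorm_pow {A : Type*} [NormedRing A] [NormedAlgebra ℂ A]
    [CompleteSpace A] (a : A) {s : ℝ≥0} (h : ∀ k : ℕ, s ^ k ≤ ‖a ^ k‖₊) :
    (s : ℝ≥0∞) ≤ spectralRadius ℂ a := by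
  refine ge_of_tendsto (spectrum.pow_nnnorm_pow_one_div_tendsto_nhds_spectralRadius a) ?_
  filter_upwards [eventually_ne_atTop 0] with k hk
  calc (s : ℝ≥0∞) = ((s : ℝ≥0∞) ^ k) ^ (k⁻¹ : ℝ) := (ENNReal.pow_rpow_inv_natCast hk _).symm
    _ ≤ (‖a ^ k‖₊ : ℝ≥0∞) ^ (1 / k : ℝ) := by
      rw [one_div]
      gcongr
      exact_mod_cast h k

namespace Matrix

variable {m n : Type*} [Fintype n]

lemma sum_norm_le_linfty_opNorm {α : Type*} [Fintype m] [SeminormedAddCommGroup α]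
    (M : Matrix m n α) (i : m) : ∑ j, ‖M i j‖ ≤ ‖M‖ := by
  rw [linfty_opNorm_def]
  have := Finset.le_sup (f := fun i => ∑ j, ‖M i j‖₊) (Finset.mem_univ i)
  rw [← NNReal.coe_le_coe, NNReal.coe_sum] at this
  exact this

variable [DecidableEq n]

lemma pow_le_sum_pow_apply {R : Type*} [CommSemiring R] [PartialOrder R] [IsOrderedRing R]
    {C : Matrix n n R} (hC : ∀ i j, 0 ≤ C i j) {s : R} (hs : 0 ≤ s)
    (hrow : ∀ i, s ≤ ∑ j, C i j) (k : ℕ) (i : n) : s ^ k ≤ ∑ j, (C ^ k) i j := by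
  induction k with
  | zero => simp [one_apply]
  | succ k ih =>
    calc s ^ (k + 1) ≤ (∑ l, (C ^ k) i l) * s := by rw [pow_succ]; gcongr
      _ = ∑ l, (C ^ k) i l * s := Finset.sum_mul ..
      _ ≤ ∑ l, (C ^ k) i l * ∑ j, C l j := by
        gcongr with l
        exacts [pow_apply_nonneg hC k i l, hrow l]
      _ = ∑ j, (C ^ (k + 1)) i j := by
        simp only [pow_succ, mul_apply, Finset.mul_sum]
        exact Finset.sum_comm

lemma exists_mem_spectrum_le_norm_of_le_sum [Nonempty n] {C : Matrix n n ℝ}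
    (hC : ∀ i j, 0 ≤ C i j) {s : ℝ} (hs : 0 ≤ s) (hrow : ∀ i, s ≤ ∑ j, C i j) :
    ∃ z ∈ spectrum ℂ (C.map Complex.ofRealHom), s ≤ ‖z‖ := by
  have : CompleteSpace (Matrix n n ℂ) := FiniteDimensional.complete ℂ _
  obtain ⟨z, hz, hzρ⟩ := spectrum.exists_nnnorm_eq_spectralRadius (C.map Complex.ofRealHom)
  refine ⟨z, hz, ?_⟩
  have hpow : ∀ k : ℕ, s.toNNReal ^ k ≤ ‖C.map Complex.ofRealHom ^ k‖₊ := by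
    intro k
    obtain ⟨i⟩ := ‹Nonempty n›
    rw [← NNReal.coe_le_coe, NNReal.coe_pow, Real.coe_toNNReal _ hs, coe_nnnorm,
      ← Matrix.map_pow C Complex.ofRealHom]
    calc s ^ k ≤ ∑ j, (C ^ k) i j := pow_le_sum_pow_apply hC hs hrow k i
      _ = ∑ j, ‖(C ^ k).map Complex.ofRealHom i j‖ := by
        simp [Complex.norm_real, abs_of_nonneg (pow_apply_nonneg hC k i _)]
      _ ≤ _ := sum_norm_le_linfty_opNorm _ i
  have := (le_spectralRadius_of_le_nnnorm_pow _ hpow).trans hzρ.ge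
  rwa [ENNReal.coe_le_coe, ← NNReal.coe_le_coe, Real.coe_toNNReal _ hs, coe_nnnorm] at this

lemma map_ofRealHom_algebraMap_add (A : Matrix n n ℝ) (t : ℝ) :
    (algebraMap ℝ (Matrix n n ℝ) t + A).map Complex.ofRealHom =
      algebraMap ℂ (Matrix n n ℂ) t + A.map Complex.ofRealHom := by
  ext i j
  by_cases h : i = j <;> simp [algebraMap_matrix_apply, h]

lemma exists_mem_spectrum_le_norm_add_of_le_sum [Nonempty n] {A : Matrix n n ℝ}
    (hA : ∀ i j, i ≠ j → 0 ≤ A i j) {t : ℝ} (hdiag : ∀ i, 0 ≤ t + A i i) {s : ℝ}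
    (hst : 0 ≤ s + t) (hrow : ∀ i, s ≤ ∑ j, A i j) :
    ∃ μ ∈ spectrum ℂ (A.map Complex.ofRealHom), s + t ≤ ‖μ + t‖ := by
  have hC : ∀ i j, 0 ≤ (algebraMap ℝ (Matrix n n ℝ) t + A) i j := by
    intro i j
    by_cases h : i = j
    · subst h; simpa [algebraMap_matrix_apply] using hdiag i
    · simpa [algebraMap_matrix_apply, h] using hA i j h
  have hrowC : ∀ i, s + t ≤ ∑ j, (algebraMap ℝ (Matrix n n ℝ) t + A) i j := by
    intro i
    simp only [add_apply, algebraMap_matrix_apply, Finset.sum_add_distrib, Finset.sum_ite_eq,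
      Finset.mem_univ, if_true, Algebra.algebraMap_self, RingHom.id_apply]
    linarith [hrow i]
  obtain ⟨z, hz, hsz⟩ := exists_mem_spectrum_le_norm_of_le_sum hC hst hrowC
  rw [map_ofRealHom_algebraMap_add, ← sub_add_cancel z (t : ℂ), spectrum.add_mem_add_iff] at hz
  exact ⟨z - t, hz, by rwa [sub_add_cancel]⟩

end Matrix

theorem stmt5_general {N : ℕ} [NeZero N] (A : Matrix (Fin N) (Fin N) ℝ)
    (hML : ∀ i j, i ≠ j → 0 ≤ A i j) (d : ℝ)
    (hdom : ∀ μ ∈ spectrum ℂ (A.map (fun r => (r : ℂ))), μ.re ≤ d) :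
    d ≥ ⨅ i, ∑ j, A i j := by
  set m := ⨅ i, ∑ j, A i j
  have hm : ∀ i, m ≤ ∑ j, A i j := ciInf_le (Finite.bddBelow_range _)
  obtain ⟨K, hK⟩ := (Matrix.finite_spectrum (A.map Complex.ofRealHom)).isBounded.exists_norm_le
  by_contra! hdm
  have hgrow : Tendsto (fun t : ℝ => 2 * t * (m - d)) atTop atTop :=
    (tendsto_id.const_mul_atTop two_pos).atTop_mul_const (sub_pos.2 hdm)
  have hlarge : ∀ᶠ t in atTop, 0 ≤ t ∧ 0 ≤ m + t ∧ (∀ i, 0 ≤ t + A i i) ∧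
      K ^ 2 - m ^ 2 < 2 * t * (m - d) := by
    filter_upwards [eventually_ge_atTop 0, eventually_ge_atTop (-m),
      eventually_all.2 fun i => eventually_ge_atTop (-A i i),
      hgrow.eventually_gt_atTop (K ^ 2 - m ^ 2)] with t h0 hmt hdiag hbig
    exact ⟨h0, by linarith, fun i => by linarith [hdiag i], hbig⟩
  obtain ⟨t, ht, hmt, hdiag, hbig⟩ := hlarge.exists
  obtain ⟨μ, hμ, hmμ⟩ := Matrix.exists_mem_spectrum_le_norm_add_of_le_sum hML hdiag hmt hm
  have hnorm : ‖μ + t‖ ^ 2 = ‖μ‖ ^ 2 + 2 * t * μ.re + t ^ 2 := by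
    simp only [Complex.sq_norm, Complex.normSq_apply, Complex.add_re, Complex.add_im,
      Complex.ofReal_re, Complex.ofReal_im]
    ring
  nlinarith [hK μ hμ, hdom μ hμ, norm_nonneg μ]

/-- Frobenius lower estimate (row version): `d(A) ≥ minᵢ ∑ⱼ a_{ij}` for an ML-matrix. -/
theorem stmt5 {N : ℕ} [NeZero N] (A : Matrix (Fin N) (Fin N) ℝ)
    (hML : ∀ i j, i ≠ j → 0 ≤ A i j) (d : ℝ)
    (hd : (d : ℂ) ∈ spectrum ℂ (A.map (fun r => (r : ℂ))))
    (hdom : ∀ μ ∈ spectrum ℂ (A.map (fun r => (r : ℂ))), μ.re ≤ d) :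
    d ≥ ⨅ i, ∑ j, A i j :=
  stmt5_general A hML d hdom
end

section
/- Let A ∈ ℝ^{N×N} be an ML-matrix. Then its dominant eigenvalue d(A) satisfies d(A) ≥ minⱼ ∑ᵢ a_{ij} (the minimum over columns of the column sums). -/
/-!
Let every row sum of `A` be at least `t`. For `c` large, `A + c • 1` is entrywise nonnegative
with row sums at least `t + c`, so the row sums of its `k`-th power are at least `(t + c) ^ k`,
and by Gelfand's formula its spectral radius is at least `t + c`. Hence some `μ` in the spectrum
of `A` has `‖μ + c‖ ≥ t + c`, while `re μ ≤ d` and `‖μ‖ ≤ ‖A‖` give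
`‖μ + c‖ ^ 2 ≤ (d + c) ^ 2 + ‖A‖ ^ 2`. Letting `c → ∞` forces `t ≤ d`. The column version
follows by transposition.
-/

open Filter Topology
open scoped NNReal ENNReal Matrix

attribute [local instance] Matrix.linftyOpSeminormedAddCommGroup Matrix.linftyOpNormedRing
  Matrix.linftyOpNormedAlgebra Matrix.linfty_opNormOneClass

theorem spectrum.coe_le_spectralRadius_of_forall_pow_le {A : Type*} [NormedRing A]
    [NormedAlgebra ℂ A] [CompleteSpace A] {a : A} {t : ℝ≥0} (h : ∀ k : ℕ, t ^ k ≤ ‖a ^ k‖₊) :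
    (t : ℝ≥0∞) ≤ spectralRadius ℂ a := by
  refine ge_of_tendsto (spectrum.pow_nnnorm_pow_one_div_tendsto_nhds_spectralRadius a) ?_
  filter_upwards [eventually_ne_atTop 0] with k hk
  calc (t : ℝ≥0∞) = ((t : ℝ≥0∞) ^ k) ^ (1 / k : ℝ) := by
        rw [← ENNReal.rpow_natCast, ← ENNReal.rpow_mul, mul_one_div_cancel (by positivity),
          ENNReal.rpow_one]
    _ ≤ (‖a ^ k‖₊ : ℝ≥0∞) ^ (1 / k : ℝ) := by gcongr; exact_mod_cast h k

theorem Complex.norm_add_ofReal_sq_le {z : ℂ} {c d : ℝ} (hc : ‖z‖ ≤ c) (hd : z.re ≤ d) :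
    ‖z + c‖ ^ 2 ≤ (d + c) ^ 2 + ‖z‖ ^ 2 := by
  have hre : 0 ≤ z.re + c := by linarith [neg_abs_le z.re, Complex.abs_re_le_norm z]
  have him : z.im ^ 2 ≤ ‖z‖ ^ 2 := by
    rw [← sq_abs]; gcongr; exact Complex.abs_im_le_norm z
  rw [Complex.sq_norm, Complex.normSq_apply]
  simp only [Complex.add_re, Complex.ofReal_re, Complex.add_im, Complex.ofReal_im, add_zero]
  nlinarith

theorem le_of_eventually_sq_add_le {s d K : ℝ}
    (h : ∀ᶠ c in atTop, (s + c) ^ 2 ≤ (d + c) ^ 2 + K) : s ≤ d := by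
  by_contra! hds
  obtain ⟨c, hc, hlarge⟩ :=
    (h.and (eventually_gt_atTop ((K + d ^ 2 - s ^ 2) / (2 * (s - d))))).exists
  rw [div_lt_iff₀ (by linarith)] at hlarge
  nlinarith

namespace Matrix

theorem sum_norm_apply_le_linfty_opNorm {m n α : Type*} [Fintype m] [Fintype n]
    [SeminormedAddCommGroup α] (M : Matrix m n α) (i : m) : ∑ j, ‖M i j‖ ≤ ‖M‖ := by
  rw [linfty_opNorm_def]
  simpa using
    NNReal.coe_le_coe.2 (Finset.le_sup (f := fun i => ∑ j, ‖M i j‖₊) (Finset.mem_univ i))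

variable {n : Type*} [Fintype n] [DecidableEq n]

theorem spectrum_transpose {R : Type*} [CommRing R] (M : Matrix n n R) :
    spectrum R Mᵀ = spectrum R M := by
  ext μ
  rw [spectrum.mem_iff, spectrum.mem_iff, isUnit_iff_isUnit_det, isUnit_iff_isUnit_det,
    ← det_transpose, transpose_sub, algebraMap_eq_diagonal, diagonal_transpose, transpose_transpose]

theorem pow_le_sum_pow_apply_s6 {B : Matrix n n ℝ} (hB : ∀ i j, 0 ≤ B i j) {t : ℝ} (ht : 0 ≤ t)
    (hrow : ∀ i, t ≤ ∑ j, B i j) (k : ℕ) (i : n) : t ^ k ≤ ∑ j, (B ^ k) i j := by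
  induction k generalizing i with
  | zero => simp [one_apply]
  | succ k ih =>
    calc t ^ (k + 1) ≤ ∑ l, B i l * t ^ k := by
          rw [pow_succ', ← Finset.sum_mul]; gcongr; exact hrow i
      _ ≤ ∑ l, B i l * ∑ j, (B ^ k) l j := by gcongr with l; exacts [hB i l, ih l]
      _ = ∑ j, (B ^ (k + 1)) i j := by
          simp only [pow_succ', mul_apply, Finset.mul_sum]
          exact Finset.sum_comm

theorem exists_mem_spectrum_le_norm_of_le_sum_row [Nonempty n] {B : Matrix n n ℝ}
    (hB : ∀ i j, 0 ≤ B i j) {t : ℝ} (ht : 0 ≤ t) (hrow : ∀ i, t ≤ ∑ j, B i j) :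
    ∃ μ ∈ spectrum ℂ (B.map (fun r => (r : ℂ))), t ≤ ‖μ‖ := by
  obtain ⟨μ, hμ, hμρ⟩ := spectrum.exists_nnnorm_eq_spectralRadius (B.map (fun r => (r : ℂ)))
  refine ⟨μ, hμ, ?_⟩
  lift t to ℝ≥0 using ht
  have hnorm_pow (k : ℕ) : t ^ k ≤ ‖B.map (fun r => (r : ℂ)) ^ k‖₊ := by
    obtain ⟨i⟩ := ‹Nonempty n›
    have hmap : (B.map fun r => (r : ℂ)) ^ k = (B ^ k).map fun r => (r : ℂ) :=
      (map_pow Complex.ofRealHom.mapMatrix B k).symm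
    rw [← NNReal.coe_le_coe, NNReal.coe_pow, coe_nnnorm, hmap]
    calc t ^ k ≤ ∑ j, (B ^ k) i j := pow_le_sum_pow_apply_s6 hB t.2 hrow k i
      _ = ∑ j, ‖(B ^ k).map (fun r => (r : ℂ)) i j‖ := by
          simp [Complex.norm_real, abs_of_nonneg (pow_apply_nonneg hB k i _)]
      _ ≤ _ := sum_norm_apply_le_linfty_opNorm _ i
  have := hμρ ▸ spectrum.coe_le_spectralRadius_of_forall_pow_le hnorm_pow
  exact_mod_cast this

theorem le_of_forall_re_le_of_le_sum_row [Nonempty n] {A : Matrix n n ℝ}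
    (hML : ∀ i j, i ≠ j → 0 ≤ A i j) {t d : ℝ}
    (hdom : ∀ μ ∈ spectrum ℂ (A.map (fun r => (r : ℂ))), μ.re ≤ d)
    (hrow : ∀ i, t ≤ ∑ j, A i j) : t ≤ d := by
  set R := ‖A.map (fun r => (r : ℂ))‖
  refine le_of_eventually_sq_add_le (K := R ^ 2) ?_
  filter_upwards [eventually_ge_atTop R, eventually_ge_atTop (-t),
    eventually_all.2 fun i => eventually_ge_atTop (-A i i)] with c hRc htc hdiag
  have hB : ∀ i j, 0 ≤ (A + c • 1) i j := by
    intro i j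
    rcases eq_or_ne i j with rfl | hij
    · simp only [add_apply, smul_apply, one_apply_eq, smul_eq_mul, mul_one]
      linarith [hdiag i]
    · simpa [one_apply_ne hij] using hML i j hij
  have hrowB : ∀ i, t + c ≤ ∑ j, (A + c • 1) i j := by
    intro i
    simp only [add_apply, smul_apply, one_apply, smul_eq_mul, mul_ite, mul_one, mul_zero,
      Finset.sum_add_distrib, Finset.sum_ite_eq, Finset.mem_univ, if_true, add_le_add_iff_right]
    exact hrow i
  obtain ⟨μ, hμ, hμt⟩ := exists_mem_spectrum_le_norm_of_le_sum_row hB (by linarith) hrowB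
  have hmap : (A + c • 1).map (fun r => (r : ℂ)) =
      algebraMap ℂ _ (c : ℂ) + A.map (fun r => (r : ℂ)) := by
    ext i j
    rcases eq_or_ne i j with rfl | hij
    · simp [algebraMap_eq_diagonal, add_comm]
    · simp [algebraMap_eq_diagonal, one_apply_ne hij, hij]
  rw [hmap, ← sub_add_cancel μ (c : ℂ), spectrum.add_mem_add_iff] at hμ
  have hz : ‖μ - c‖ ≤ R := spectrum.norm_le_norm_of_mem hμ
  calc (t + c) ^ 2 ≤ ‖μ - c + c‖ ^ 2 := by rw [sub_add_cancel]; gcongr; linarith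
    _ ≤ (d + c) ^ 2 + ‖μ - c‖ ^ 2 := Complex.norm_add_ofReal_sq_le (hz.trans hRc) (hdom _ hμ)
    _ ≤ (d + c) ^ 2 + R ^ 2 := by gcongr

end Matrix

theorem stmt6_general {N : ℕ} [NeZero N] (A : Matrix (Fin N) (Fin N) ℝ)
    (hML : ∀ i j, i ≠ j → 0 ≤ A i j) (d : ℝ)
    (hdom : ∀ μ ∈ spectrum ℂ (A.map (fun r => (r : ℂ))), μ.re ≤ d) :
    d ≥ ⨅ j, ∑ i, A i j := by
  refine Matrix.le_of_forall_re_le_of_le_sum_row (A := Aᵀ) (fun i j hij => hML j i hij.symm) ?_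
    fun j => ciInf_le (Set.finite_range _).bddBelow j
  rwa [Matrix.transpose_map, Matrix.spectrum_transpose]

/-- Frobenius lower estimate (column version): `d(A) ≥ minⱼ ∑ᵢ a_{ij}` for an ML-matrix. -/
theorem stmt6 {N : ℕ} [NeZero N] (A : Matrix (Fin N) (Fin N) ℝ)
    (hML : ∀ i j, i ≠ j → 0 ≤ A i j) (d : ℝ)
    (hd : (d : ℂ) ∈ spectrum ℂ (A.map (fun r => (r : ℂ))))
    (hdom : ∀ μ ∈ spectrum ℂ (A.map (fun r => (r : ℂ))), μ.re ≤ d) :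
    d ≥ ⨅ j, ∑ i, A i j :=
  stmt6_general A hML d hdom
end

section
/- Let A ∈ ℝ^{N×N} be an ML-matrix and let i ≠ j be indices. Then d(A) ≥ (1/2)(a_{ii} + a_{jj}) + √(a_{ij} a_{ji}). -/
/-!
If `a_ij > 0`, the nonnegative vector `x = a_ij e_i + (λ - a_ii) e_j` with
`λ = (a_ii + a_jj)/2 + √(a_ij a_ji)` satisfies `λ x ≤ A x`, because `λ` lies below the larger
eigenvalue of the principal `2 × 2` block; if `a_ij = 0`, the unit vectors `e_i`, `e_j` show
`a_ii, a_jj ≤ d` instead. Such a subinvariance `λ x ≤ A x` forces `λ ≤ d`: for large `t` the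
matrix `M = A + t I` is entrywise nonnegative, so `(λ + t)^m x ≤ M^m x` and Gelfand's formula
give `λ + t ≤ ρ(M)`, while every eigenvalue `μ + t` of `M` has
`|μ + t|² ≤ (d + t)² + ‖A‖²`, which is eventually below `(λ + t)²` when `λ > d`.
-/

open Filter Topology

theorem spectrum.ofReal_le_spectralRadius_of_pow_le_mul_norm {A : Type*} [NormedRing A]
    [NormedAlgebra ℂ A] [CompleteSpace A] (a : A) {r K : ℝ} (hr : 0 ≤ r) (hK : 0 < K)
    (h : ∀ n : ℕ, r ^ n ≤ K * ‖a ^ n‖) : ENNReal.ofReal r ≤ spectralRadius ℂ a := by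
  have hK1 : Tendsto (fun n : ℕ => ENNReal.ofReal (K ^ (1 / n : ℝ))) atTop (𝓝 1) := by
    simpa using ENNReal.tendsto_ofReal
      (tendsto_const_nhds.rpow tendsto_one_div_atTop_nhds_zero_nat (Or.inl hK.ne'))
  have hlim := ENNReal.Tendsto.mul hK1 (Or.inl one_ne_zero)
    (spectrum.pow_norm_pow_one_div_tendsto_nhds_spectralRadius a) (Or.inr ENNReal.one_ne_top)
  rw [one_mul] at hlim
  refine ge_of_tendsto hlim ?_
  filter_upwards [eventually_ne_atTop 0] with n hn
  rw [← ENNReal.ofReal_mul (by positivity), ← Real.mul_rpow hK.le (norm_nonneg _)]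
  refine ENNReal.ofReal_le_ofReal ?_
  calc r = (r ^ n) ^ (1 / n : ℝ) := by
        rw [← Real.rpow_natCast, ← Real.rpow_mul hr, mul_one_div_cancel (by positivity),
          Real.rpow_one]
    _ ≤ (K * ‖a ^ n‖) ^ (1 / n : ℝ) := by gcongr; exact h n

theorem spectrum.spectralRadius_add_algebraMap_le {A : Type*} [NormedRing A]
    [NormedAlgebra ℂ A] [CompleteSpace A] [NormOneClass A] (a : A) {d t : ℝ}
    (hd : ∀ μ ∈ spectrum ℂ a, μ.re ≤ d) (ht : ‖a‖ ≤ t) :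
    spectralRadius ℂ (a + algebraMap ℂ A t) ≤ ENNReal.ofReal √((d + t) ^ 2 + ‖a‖ ^ 2) := by
  refine iSup₂_le fun ν hν => ?_
  rw [← spectrum.add_singleton_eq] at hν
  obtain ⟨μ, hμ, _, rfl, rfl⟩ := hν
  have hre := (Complex.abs_re_le_norm μ).trans (spectrum.norm_le_norm_of_mem hμ)
  have him := (Complex.abs_im_le_norm μ).trans (spectrum.norm_le_norm_of_mem hμ)
  show ((‖μ + (t : ℂ)‖₊ : NNReal) : ENNReal) ≤ _
  rw [← enorm_eq_nnnorm, ← ofReal_norm, Complex.norm_def, Complex.normSq_apply]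
  refine ENNReal.ofReal_le_ofReal (Real.sqrt_le_sqrt ?_)
  have hμd := hd μ hμ
  simp only [Complex.add_re, Complex.ofReal_re, Complex.add_im, Complex.ofReal_im, add_zero]
  rw [abs_le] at hre him
  nlinarith

namespace Matrix

variable {n : Type*} [Fintype n]

theorem mulVec_mono_of_nonneg {M : Matrix n n ℝ} (hM : ∀ k l, 0 ≤ M k l) {x y : n → ℝ}
    (hxy : x ≤ y) : M *ᵥ x ≤ M *ᵥ y := fun k =>
  Finset.sum_le_sum fun l _ => mul_le_mul_of_nonneg_left (hxy l) (hM k l)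

variable [DecidableEq n]

theorem pow_smul_le_pow_mulVec {M : Matrix n n ℝ} (hM : ∀ k l, 0 ≤ M k l) {r : ℝ} (hr : 0 ≤ r)
    {x : n → ℝ} (h : r • x ≤ M *ᵥ x) (m : ℕ) : r ^ m • x ≤ (M ^ m) *ᵥ x := by
  induction m with
  | zero => simp
  | succ m ih =>
    calc r ^ (m + 1) • x = r ^ m • (r • x) := by rw [pow_succ, mul_smul]
      _ ≤ r ^ m • (M *ᵥ x) := smul_le_smul_of_nonneg_left h (pow_nonneg hr m)
      _ = M *ᵥ (r ^ m • x) := (mulVec_smul M _ x).symm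
      _ ≤ M *ᵥ ((M ^ m) *ᵥ x) := mulVec_mono_of_nonneg hM ih
      _ = (M ^ (m + 1)) *ᵥ x := by rw [mulVec_mulVec, pow_succ']

section LinftyOpNorm

attribute [local instance] Matrix.linftyOpNormedAddCommGroup Matrix.linftyOpNormedRing
  Matrix.linftyOpNormedAlgebra

theorem linfty_opNorm_map_ofReal (B : Matrix n n ℝ) :
    ‖B.map (fun r => (r : ℂ))‖ = ‖B‖ := by
  simp [linfty_opNorm_def]

theorem ofReal_le_spectralRadius_of_smul_le_mulVec {M : Matrix n n ℝ} (hM : ∀ k l, 0 ≤ M k l)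
    {r : ℝ} (hr : 0 ≤ r) {x : n → ℝ} {l : n} (hxl : 0 < x l) (h : r • x ≤ M *ᵥ x) :
    ENNReal.ofReal r ≤ spectralRadius ℂ (M.map (fun r => (r : ℂ))) := by
  refine spectrum.ofReal_le_spectralRadius_of_pow_le_mul_norm _ hr
    (div_pos (hxl.trans_le ((Real.le_norm_self _).trans (norm_le_pi_norm x l))) hxl) fun m => ?_
  rw [show (M.map fun r => (r : ℂ)) ^ m = (M ^ m).map fun r => (r : ℂ) from
      (map_pow Complex.ofRealHom.mapMatrix M m).symm,
    linfty_opNorm_map_ofReal, div_mul_eq_mul_div, le_div_iff₀ hxl, mul_comm ‖x‖]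
  calc r ^ m * x l ≤ ((M ^ m) *ᵥ x) l := pow_smul_le_pow_mulVec hM hr h m l
    _ ≤ ‖(M ^ m) *ᵥ x‖ := (Real.le_norm_self _).trans (norm_le_pi_norm _ l)
    _ ≤ ‖M ^ m‖ * ‖x‖ := linfty_opNorm_mulVec _ _

theorem le_of_smul_le_mulVec_of_forall_re_le {A : Matrix n n ℝ} (hA : ∀ k l, k ≠ l → 0 ≤ A k l)
    {d : ℝ} (hd : ∀ μ ∈ spectrum ℂ (A.map (fun r => (r : ℂ))), μ.re ≤ d) {lam : ℝ}
    {x : n → ℝ} {l : n} (hxl : 0 < x l) (h : lam • x ≤ A *ᵥ x) : lam ≤ d := by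
  have : Nonempty n := ⟨l⟩
  set C := ‖A.map (fun r => (r : ℂ))‖
  by_contra! hlt
  obtain ⟨t, hCt, hlamt, hdiag, hgap⟩ : ∃ t, C ≤ t ∧ 0 ≤ lam + t ∧ (∀ k, -A k k ≤ t) ∧
      (d + t) ^ 2 + C ^ 2 < (lam + t) ^ 2 := by
    have hgap : ∀ᶠ t in atTop, (d + t) ^ 2 + C ^ 2 < (lam + t) ^ 2 := by
      filter_upwards [eventually_gt_atTop ((C ^ 2 / (lam - d) - lam - d) / 2)] with t ht
      have : C ^ 2 < (lam - d) * (lam + d + 2 * t) := by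
        rw [← div_lt_iff₀' (sub_pos.2 hlt)]; linarith
      nlinarith
    exact ((eventually_ge_atTop C).and ((eventually_ge_atTop (-lam)).and
      ((eventually_all.2 fun k => eventually_ge_atTop (-A k k)).and hgap))).exists.imp
      fun t ⟨h1, h2, h3, h4⟩ => ⟨h1, by linarith, h3, h4⟩
  set M := A + t • (1 : Matrix n n ℝ)
  have hM : ∀ k l, 0 ≤ M k l := by
    intro k l
    rcases eq_or_ne k l with rfl | hkl
    · simp only [M, add_apply, smul_apply, one_apply_eq, smul_eq_mul, mul_one]
      linarith [hdiag k]
    · simpa [M, one_apply_ne hkl] using hA k l hkl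
  have hMx : (lam + t) • x ≤ M *ᵥ x := by
    rw [add_mulVec, smul_mulVec, one_mulVec, add_smul]
    exact add_le_add_left h _
  have hMc : M.map (fun r => (r : ℂ)) = A.map (fun r => (r : ℂ)) + algebraMap ℂ _ (t : ℂ) := by
    ext k l
    rcases eq_or_ne k l with rfl | hkl <;> simp [M, algebraMap_matrix_apply, *]
  have hρ := (ofReal_le_spectralRadius_of_smul_le_mulVec hM hlamt hxl hMx).trans
    (hMc ▸ spectrum.spectralRadius_add_algebraMap_le _ hd hCt)
  rw [ENNReal.ofReal_le_ofReal_iff (Real.sqrt_nonneg _), Real.le_sqrt hlamt (by positivity)] at hρ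
  linarith

end LinftyOpNorm

theorem diag_le_of_forall_re_le {A : Matrix n n ℝ} (hA : ∀ k l, k ≠ l → 0 ≤ A k l) {d : ℝ}
    (hd : ∀ μ ∈ spectrum ℂ (A.map (fun r => (r : ℂ))), μ.re ≤ d) (k : n) : A k k ≤ d := by
  refine le_of_smul_le_mulVec_of_forall_re_le hA hd (x := Pi.single k 1) (l := k) (by simp)
    fun l => ?_
  rcases eq_or_ne l k with rfl | hlk
  · simp
  · simpa [hlk] using hA l k hlk

theorem le_of_sub_mul_sub_le_of_forall_re_le {A : Matrix n n ℝ}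
    (hA : ∀ k l, k ≠ l → 0 ≤ A k l) {d : ℝ}
    (hd : ∀ μ ∈ spectrum ℂ (A.map (fun r => (r : ℂ))), μ.re ≤ d) {i j : n} (hij : i ≠ j)
    (hb : 0 < A i j) {lam : ℝ} (hlam : A i i ≤ lam)
    (hchar : (lam - A i i) * (lam - A j j) ≤ A i j * A j i) : lam ≤ d := by
  refine le_of_smul_le_mulVec_of_forall_re_le hA hd
    (x := A i j • Pi.single i 1 + (lam - A i i) • Pi.single j 1) (l := i)
    (by simpa [hij] using hb) fun l => ?_
  simp only [mulVec_add, mulVec_smul, mulVec_single_one, Pi.add_apply, Pi.smul_apply, col_apply,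
    smul_eq_mul]
  rcases eq_or_ne l i with rfl | hli
  · simp only [Pi.single_eq_same, Pi.single_eq_of_ne hij]
    linear_combination
  rcases eq_or_ne l j with rfl | hlj
  · simp only [Pi.single_eq_same, Pi.single_eq_of_ne hli]
    linear_combination hchar
  · simp only [Pi.single_eq_of_ne hli, Pi.single_eq_of_ne hlj, mul_zero, add_zero]
    exact add_nonneg (mul_nonneg hb.le (hA l i hli)) (mul_nonneg (sub_nonneg.2 hlam) (hA l j hlj))

theorem half_add_add_sqrt_le_of_forall_re_le {A : Matrix n n ℝ}
    (hA : ∀ k l, k ≠ l → 0 ≤ A k l) {d : ℝ}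
    (hd : ∀ μ ∈ spectrum ℂ (A.map (fun r => (r : ℂ))), μ.re ≤ d) {i j : n} (hij : i ≠ j)
    (hle : A i i ≤ A j j) : 1 / 2 * (A i i + A j j) + √(A i j * A j i) ≤ d := by
  rcases (hA i j hij).eq_or_lt with hb | hb
  · rw [← hb, zero_mul, Real.sqrt_zero, add_zero]
    linarith [diag_le_of_forall_re_le hA hd i, diag_le_of_forall_re_le hA hd j]
  · have hsqrt := Real.sq_sqrt (mul_nonneg hb.le (hA j i hij.symm))
    refine le_of_sub_mul_sub_le_of_forall_re_le hA hd hij hb ?_ ?_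
    · linarith [Real.sqrt_nonneg (A i j * A j i)]
    · nlinarith [sq_nonneg (A j j - A i i)]

end Matrix

theorem stmt7_general {N : ℕ} (A : Matrix (Fin N) (Fin N) ℝ)
    (hML : ∀ i j, i ≠ j → 0 ≤ A i j) (i j : Fin N) (hij : i ≠ j) (d : ℝ)
    (hdom : ∀ μ ∈ spectrum ℂ (A.map (fun r => (r : ℂ))), μ.re ≤ d) :
    d ≥ (1 / 2) * (A i i + A j j) + Real.sqrt (A i j * A j i) := by
  rcases le_total (A i i) (A j j) with h | h
  · exact Matrix.half_add_add_sqrt_le_of_forall_re_le hML hdom hij h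
  · have := Matrix.half_add_add_sqrt_le_of_forall_re_le hML hdom hij.symm h
    rwa [add_comm (A j j), mul_comm (A j i)] at this

/-- Two-index specialization of Kolotilina's estimate:
`d(A) ≥ (1/2)(a_{ii} + a_{jj}) + √(a_{ij} a_{ji})` for an ML-matrix. -/
theorem stmt7 {N : ℕ} (A : Matrix (Fin N) (Fin N) ℝ)
    (hML : ∀ i j, i ≠ j → 0 ≤ A i j) (i j : Fin N) (hij : i ≠ j) (d : ℝ)
    (hd : (d : ℂ) ∈ spectrum ℂ (A.map (fun r => (r : ℂ))))
    (hdom : ∀ μ ∈ spectrum ℂ (A.map (fun r => (r : ℂ))), μ.re ≤ d) :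
    d ≥ (1 / 2) * (A i i + A j j) + Real.sqrt (A i j * A j i) :=
  stmt7_general A hML i j hij d hdom
end

section
/- Let A ∈ ℝ^{N×N} be an ML-matrix. Then for all t ≥ 0, the matrix exponential e^{tA} has all entries nonnegative; moreover e^{tA} maps vectors with all coordinates strictly positive to vectors with all coordinates strictly positive. -/
/-!
Adding `s • 1` to an ML-matrix `A`, with `s` at least every `-A i i`, gives an entrywise
nonnegative matrix, and `exp (A + s • 1) = e^s • exp A`. The exponential series of a nonnegative
matrix has nonnegative terms and constant term `1`, so `exp A` is nonnegative with positive
diagonal, hence maps positive vectors to positive vectors.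
-/

open NormedSpace Nat

namespace Matrix

variable {n : Type*}

theorem mulVec_apply_pos [Fintype n] {M : Matrix n n ℝ} (hM : ∀ i j, 0 ≤ M i j)
    (hMdiag : ∀ i, 0 < M i i) {x : n → ℝ} (hx : ∀ i, 0 < x i) (i : n) : 0 < (M *ᵥ x) i :=
  Finset.sum_pos' (fun j _ => mul_nonneg (hM i j) (hx j).le)
    ⟨i, Finset.mem_univ i, mul_pos (hMdiag i) (hx i)⟩

/-- ML-matrices (Metzler–Leontief). -/
def IsMetzler (A : Matrix n n ℝ) : Prop :=
  ∀ i j, i ≠ j → 0 ≤ A i j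

theorem IsMetzler.smul {A : Matrix n n ℝ} (hA : A.IsMetzler) {t : ℝ} (ht : 0 ≤ t) :
    (t • A).IsMetzler :=
  fun i j hij => mul_nonneg ht (hA i j hij)

variable [Fintype n] [DecidableEq n]

theorem hasSum_exp_apply {𝕂 : Type*} [RCLike 𝕂] (A : Matrix n n 𝕂) (i j : n) :
    HasSum (fun k => (k !⁻¹ : 𝕂) * (A ^ k) i j) (exp A i j) := by
  -- `exp` only sees the topology; any algebra norm inducing it yields the convergent series
  open scoped Norms.Operator in
  exact Pi.hasSum.1 (Pi.hasSum.1 (exp_series_hasSum_exp' (𝕂 := 𝕂) A) i) j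

theorem exp_apply_nonneg_of_nonneg {A : Matrix n n ℝ} (hA : ∀ i j, 0 ≤ A i j) (i j : n) :
    0 ≤ exp A i j :=
  (hasSum_exp_apply A i j).nonneg fun k =>
    mul_nonneg (by positivity) (pow_apply_nonneg hA k i j)

theorem one_le_exp_apply_self_of_nonneg {A : Matrix n n ℝ} (hA : ∀ i j, 0 ≤ A i j) (i : n) :
    1 ≤ exp A i i := by
  simpa using le_hasSum (hasSum_exp_apply A i i) 0 fun k _ =>
    mul_nonneg (by positivity) (pow_apply_nonneg hA k i i)

theorem exp_add_smul_one (A : Matrix n n ℝ) (s : ℝ) :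
    exp (A + s • 1) = Real.exp s • exp A := by
  rw [exp_add_of_commute _ _ ((Commute.one_right A).smul_right s), smul_one_eq_diagonal,
    exp_diagonal]
  ext i j
  simp [mul_diagonal, Real.exp_eq_exp_ℝ, mul_comm]

namespace IsMetzler

variable {A : Matrix n n ℝ}

theorem add_smul_one_nonneg (hA : A.IsMetzler) (i j : n) :
    0 ≤ (A + (∑ k, |A k k|) • 1) i j := by
  obtain rfl | hij := eq_or_ne i j
  · have : |A i i| ≤ ∑ k, |A k k| :=
      Finset.single_le_sum (f := fun k => |A k k|) (fun k _ => abs_nonneg _) (Finset.mem_univ i)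
    simp only [add_apply, smul_apply, one_apply_eq, smul_eq_mul, mul_one]
    linarith [neg_abs_le (A i i)]
  · simpa [one_apply_ne hij] using hA i j hij

theorem exp_apply_nonneg (hA : A.IsMetzler) (i j : n) : 0 ≤ exp A i j := by
  have h := exp_apply_nonneg_of_nonneg hA.add_smul_one_nonneg i j
  rw [exp_add_smul_one, smul_apply, smul_eq_mul] at h
  exact nonneg_of_mul_nonneg_right h (Real.exp_pos _)

theorem exp_apply_self_pos (hA : A.IsMetzler) (i : n) : 0 < exp A i i := by
  have h := one_le_exp_apply_self_of_nonneg hA.add_smul_one_nonneg i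
  rw [exp_add_smul_one, smul_apply, smul_eq_mul] at h
  exact (pos_iff_pos_of_mul_pos (one_pos.trans_le h)).1 (Real.exp_pos _)

end IsMetzler

end Matrix

open Matrix

/-- Monotonicity of the flow of a cooperative autonomous linear system: for an ML-matrix `A`
and `t ≥ 0`, `e^{tA}` is entrywise nonnegative and maps positive vectors to positive vectors. -/
theorem stmt11 {N : ℕ} (A : Matrix (Fin N) (Fin N) ℝ)
    (hML : ∀ i j, i ≠ j → 0 ≤ A i j) :
    ∀ t : ℝ, 0 ≤ t →
      (∀ i j, 0 ≤ NormedSpace.exp (t • A) i j) ∧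
      (∀ x₀ : Fin N → ℝ, (∀ i, 0 < x₀ i) →
        ∀ i, 0 < (NormedSpace.exp (t • A)).mulVec x₀ i) := by
  intro t ht
  have htA : (t • A).IsMetzler := IsMetzler.smul hML ht
  exact ⟨htA.exp_apply_nonneg, fun x₀ hx₀ =>
    mulVec_apply_pos htA.exp_apply_nonneg htA.exp_apply_self_pos hx₀⟩
end

section
/- Let A ∈ ℝ^{N×N} be an ML-matrix and let i ≠ j. For the solution x(t) = e^{tA}x₀ with x₀ having all positive coordinates, the function t ↦ xᵢ(t)·xⱼ(t) satisfies (xᵢxⱼ)'(t) ≥ (a_{ii} + a_{jj} + 2√(a_{ij}a_{ji}))·xᵢ(t)·xⱼ(t) for all t ≥ 0. -/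
/-!
Adding a large multiple of the identity to an ML-matrix `A` makes it entrywise nonnegative while
only rescaling `exp (t • A)` by a positive scalar, so `exp (t • A)` is entrywise nonnegative and the
flow `x t = exp (t • A) *ᵥ x₀` stays in the nonnegative orthant. Then `xᵢ' ≥ aᵢᵢ xᵢ + aᵢⱼ xⱼ`, and
`(xᵢ xⱼ)' ≥ (aᵢᵢ + aⱼⱼ) xᵢ xⱼ + aᵢⱼ xⱼ² + aⱼᵢ xᵢ² ≥ (aᵢᵢ + aⱼⱼ + 2 √(aᵢⱼ aⱼᵢ)) xᵢ xⱼ` by AM-GM.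
-/

open NormedSpace Matrix
open scoped Nat

namespace Matrix

variable {ι : Type*} [Fintype ι] [DecidableEq ι]

open scoped Norms.Operator in
theorem hasSum_exp_apply_s16 (M : Matrix ι ι ℝ) (k l : ι) :
    HasSum (fun n : ℕ => (n ! : ℝ)⁻¹ * (M ^ n) k l) (exp M k l) :=
  (exp_series_hasSum_exp' (𝕂 := ℝ) M).map (entryLinearMap ℝ ℝ k l)
    (entryLinearMap ℝ ℝ k l).continuous_of_finiteDimensional

theorem exp_apply_nonneg {M : Matrix ι ι ℝ} (hM : ∀ k l, 0 ≤ M k l) (k l : ι) :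
    0 ≤ exp M k l :=
  (hasSum_exp_apply_s16 M k l).nonneg fun n => mul_nonneg (by positivity) (pow_apply_nonneg hM n k l)

theorem exp_add_smul_one_s16 (M : Matrix ι ι ℝ) (c : ℝ) :
    exp (M + c • 1) = Real.exp c • exp M := by
  have hscalar : exp (algebraMap ℝ (Matrix ι ι ℝ) c) = algebraMap ℝ _ (Real.exp c) := by
    open scoped Norms.Operator in
    rw [Real.exp_eq_exp_ℝ]; exact (algebraMap_exp_comm c).symm
  rw [exp_add_of_commute _ _ ((Commute.one_right M).smul_right c),
    ← Algebra.algebraMap_eq_smul_one, hscalar, ← Algebra.commutes, ← Algebra.smul_def]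

theorem exp_apply_nonneg_of_offDiag_nonneg {M : Matrix ι ι ℝ} (hM : ∀ k l, k ≠ l → 0 ≤ M k l)
    (k l : ι) : 0 ≤ exp M k l := by
  obtain ⟨c, hc⟩ := Finite.bddAbove_range fun k => -M k k
  have hshift : ∀ k l, 0 ≤ (M + c • 1) k l := by
    intro k l
    rcases eq_or_ne k l with rfl | hkl
    · have hck : -M k k ≤ c := hc ⟨k, rfl⟩
      simp only [add_apply, smul_apply, one_apply_eq, smul_eq_mul, mul_one]
      linarith
    · simpa [one_apply_ne hkl] using hM k l hkl
  have hexp : exp M = Real.exp (-c) • exp (M + c • 1) := by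
    rw [← exp_add_smul_one_s16, add_assoc, ← add_smul, add_neg_cancel, zero_smul, add_zero]
  rw [hexp]
  exact mul_nonneg (Real.exp_nonneg _) (exp_apply_nonneg hshift k l)

open scoped Norms.Operator in
theorem hasDerivAt_exp_smul_mulVec (A : Matrix ι ι ℝ) (v : ι → ℝ) (t : ℝ) :
    HasDerivAt (fun s : ℝ => exp (s • A) *ᵥ v) (A *ᵥ (exp (t • A) *ᵥ v)) t := by
  let applyTo : Matrix ι ι ℝ →L[ℝ] ι → ℝ := ((mulVecBilin ℝ ℝ).flip v).toContinuousLinearMap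
  rw [mulVec_mulVec]
  exact applyTo.hasFDerivAt.comp_hasDerivAt t (hasDerivAt_exp_smul_const' A t)

theorem mul_add_mul_le_mulVec_apply {R : Type*} [Semiring R] [PartialOrder R] [IsOrderedRing R]
    {M : Matrix ι ι R} (hM : ∀ k l, k ≠ l → 0 ≤ M k l) {v : ι → R} (hv : ∀ k, 0 ≤ v k)
    {a b : ι} (hab : a ≠ b) : M a a * v a + M a b * v b ≤ (M *ᵥ v) a := by
  calc M a a * v a + M a b * v b = ∑ l ∈ {a, b}, M a l * v l :=
        (Finset.sum_pair (f := fun l => M a l * v l) hab).symm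
    _ ≤ ∑ l, M a l * v l := Finset.sum_le_sum_of_subset_of_nonneg (Finset.subset_univ _)
        fun l _ hl => mul_nonneg (hM a l fun h => hl (h ▸ Finset.mem_insert_self a _)) (hv l)

end Matrix

theorem two_sqrt_mul_mul_le {b c : ℝ} (hb : 0 ≤ b) (hc : 0 ≤ c) (p q : ℝ) :
    2 * √(b * c) * (p * q) ≤ b * q ^ 2 + c * p ^ 2 := by
  rw [Real.sqrt_mul hb]
  nlinarith [sq_nonneg (√b * q - √c * p), Real.sq_sqrt hb, Real.sq_sqrt hc]

/-- Differential inequality for `xᵢ xⱼ` along the flow of a cooperative autonomous system. -/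
theorem stmt16 {N : ℕ} (A : Matrix (Fin N) (Fin N) ℝ)
    (hML : ∀ i j, i ≠ j → 0 ≤ A i j) (i j : Fin N) (hij : i ≠ j)
    (x₀ : Fin N → ℝ) (hx₀ : ∀ k, 0 < x₀ k)
    (x : ℝ → Fin N → ℝ)
    (hx : ∀ t, x t = (NormedSpace.exp (t • A)).mulVec x₀) :
    ∀ t : ℝ, 0 ≤ t →
      deriv (fun s => x s i * x s j) t ≥
        (A i i + A j j + 2 * Real.sqrt (A i j * A j i)) * (x t i * x t j) := by
  intro t ht
  obtain rfl : x = fun s => exp (s • A) *ᵥ x₀ := funext hx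
  have hflow := hasDerivAt_pi.1 (hasDerivAt_exp_smul_mulVec A x₀ t)
  beta_reduce
  rw [((hflow i).fun_mul (hflow j)).deriv]
  have hexp : ∀ k l, 0 ≤ exp (t • A) k l :=
    exp_apply_nonneg_of_offDiag_nonneg fun k l hkl => smul_nonneg ht (hML k l hkl)
  have hy : ∀ k, 0 ≤ (exp (t • A) *ᵥ x₀) k := fun k =>
    Finset.sum_nonneg (s := Finset.univ) fun l _ => mul_nonneg (hexp k l) (hx₀ l).le
  set y := exp (t • A) *ᵥ x₀
  have hi := mul_add_mul_le_mulVec_apply hML hy hij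
  have hj := mul_add_mul_le_mulVec_apply hML hy hij.symm
  calc (A i i + A j j + 2 * √(A i j * A j i)) * (y i * y j)
      ≤ (A i i * y i + A i j * y j) * y j + y i * (A j j * y j + A j i * y i) := by
        linear_combination two_sqrt_mul_mul_le (hML i j hij) (hML j i hij.symm) (y i) (y j)
    _ ≤ (A *ᵥ y) i * y j + y i * (A *ᵥ y) j :=
        add_le_add (mul_le_mul_of_nonneg_right hi (hy j)) (mul_le_mul_of_nonneg_left hj (hy i))
end

section
/- Let A : ℝ → ℝ^{N×N} be continuous, T-periodic, with A(t) an ML-matrix for all t, and let P be the Poincaré map (time-T solution operator) of x' = A(t)x in the standard basis. Then P is nonsingular with all entries nonnegative, and ln d(P) ≥ (1/N)·∫₀ᵀ (tr A(t) + 2 ∑_{j<k} √(a_{jk}(t)·a_{kj}(t))) dt. -/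
/-!
For `v > 0` the solution `x(t) = Φ(t) v` stays positive, since the off-diagonal entries of `A`
only push coordinates up; this gives `P ≥ 0`. Along it
`(∑ᵢ log xᵢ)' = ∑ᵢ (A x)ᵢ / xᵢ ≥ tr A + 2 ∑_{j<k} √(a_jk a_kj)`, by AM-GM on the pairs
`a_jk x_k / x_j`, `a_kj x_j / x_k`, so integrating over `[0, T]` shows that the integral is at
most `N log r` whenever `v > 0` and `P v ≤ r v`. Perron's theorem for the positive matrices
`P + εJ` supplies such pairs, with `r` an eigenvalue of `P + εJ`; a limit point of these
eigenvalues as `ε → 0` is a real eigenvalue of `P`, hence at most `d`. Invertibility of `P` is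
uniqueness of solutions of the linear equation.
-/

open Set Filter Topology Finset Matrix

section LinearODE

variable {ι : Type*} [Fintype ι]

theorem hasDerivAt_mulVec_of_hasDerivAt_entries {A Φ : ℝ → Matrix ι ι ℝ}
    (hΦ : ∀ t i j, HasDerivAt (fun s => Φ s i j) ((A t * Φ t) i j) t) (v : ι → ℝ) (t : ℝ) :
    HasDerivAt (fun s => Φ s *ᵥ v) (A t *ᵥ (Φ t *ᵥ v)) t := by
  rw [hasDerivAt_pi, mulVec_mulVec]
  intro i
  simpa only [mulVec, dotProduct, Finset.sum_mul] using
    HasDerivAt.fun_sum fun j _ => (hΦ t i j).mul_const (v j)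

theorem eq_zero_of_hasDerivAt_mulVec [DecidableEq ι] {A : ℝ → Matrix ι ι ℝ} (hA : Continuous A)
    {x : ℝ → ι → ℝ} (hx : ∀ t, HasDerivAt x (A t *ᵥ x t) t) {t₀ : ℝ} (h : x t₀ = 0)
    (t : ℝ) : x t = 0 := by
  let L : Matrix ι ι ℝ →ₗ[ℝ] (ι → ℝ) →L[ℝ] (ι → ℝ) :=
    (LinearMap.toContinuousLinearMap : _ ≃ₗ[ℝ] _).toLinearMap ∘ₗ Matrix.toLin'.toLinearMap
  obtain ⟨a, b, ht, ht₀⟩ : ∃ a b, t ∈ Set.Ioo a b ∧ t₀ ∈ Set.Ioo a b :=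
    ⟨min t t₀ - 1, max t t₀ + 1, by grind⟩
  obtain ⟨C, hC⟩ := (isCompact_Icc (a := a) (b := b)).exists_bound_of_continuousOn
    (L.continuous_of_finiteDimensional.comp hA).continuousOn
  have hlip : ∀ s ∈ Ioo a b, LipschitzOnWith C.toNNReal (A s *ᵥ ·) univ := fun s hs =>
    ((L (A s)).lipschitz.weaken (by
      simpa using Real.toNNReal_le_toNNReal (hC s (Ioo_subset_Icc_self hs)))).lipschitzOnWith
  have hzero : ∀ s, HasDerivAt (fun _ => (0 : ι → ℝ)) (A s *ᵥ 0) s := fun s => by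
    simpa using hasDerivAt_const s (0 : ι → ℝ)
  exact ODE_solution_unique_of_mem_Ioo hlip ht₀ (fun s _ => ⟨hx s, trivial⟩)
    (fun s _ => ⟨hzero s, trivial⟩) h ht

theorem isUnit_of_hasDerivAt_mul [DecidableEq ι] {A Φ : ℝ → Matrix ι ι ℝ} (hA : Continuous A)
    (hΦ0 : Φ 0 = 1) (hΦ : ∀ t i j, HasDerivAt (fun s => Φ s i j) ((A t * Φ t) i j) t) (t : ℝ) :
    IsUnit (Φ t) := by
  rw [isUnit_iff_isUnit_det, isUnit_iff_ne_zero]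
  intro hdet
  obtain ⟨w, hw, hΦw⟩ := exists_mulVec_eq_zero_iff.2 hdet
  exact hw (by simpa [hΦ0] using
    eq_zero_of_hasDerivAt_mulVec hA (hasDerivAt_mulVec_of_hasDerivAt_entries hΦ w) hΦw 0)

theorem pos_of_hasDerivAt_of_deriv_nonneg_of_pos {z z' : ℝ → ι → ℝ} {T : ℝ}
    (hz : ∀ t, HasDerivAt z (z' t) t) (h0 : ∀ i, 0 < z 0 i)
    (hz' : ∀ t ∈ Icc 0 T, (∀ j, 0 < z t j) → ∀ i, 0 ≤ z' t i) :
    ∀ t ∈ Icc 0 T, ∀ i, 0 < z t i := by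
  by_contra! hbad
  have hcont : Continuous z := continuous_iff_continuousAt.2 fun t => (hz t).continuousAt
  set S := Icc 0 T ∩ ⋃ i, {t | z t i ≤ 0}
  have hS : IsClosed S := isClosed_Icc.inter <| isClosed_iUnion_of_finite fun i =>
    isClosed_le ((continuous_apply i).comp hcont) continuous_const
  have hSbdd : BddBelow S := ⟨0, fun t ht => ht.1.1⟩
  obtain ⟨⟨ht₀0, ht₀T⟩, hbad₀⟩ : sInf S ∈ S := by
    obtain ⟨t, ht, i, hi⟩ := hbad
    exact hS.csInf_mem ⟨t, ht, mem_iUnion.2 ⟨i, hi⟩⟩ hSbdd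
  obtain ⟨i, hi⟩ := mem_iUnion.1 hbad₀
  have hbefore : ∀ s ∈ Ico 0 (sInf S), ∀ j, 0 < z s j := fun s hs j => by
    by_contra! hj
    exact hs.2.not_ge (csInf_le hSbdd ⟨⟨hs.1, hs.2.le.trans ht₀T⟩, mem_iUnion.2 ⟨j, hj⟩⟩)
  have hmono : MonotoneOn (z · i) (Icc 0 (sInf S)) := by
    refine monotoneOn_of_deriv_nonneg (convex_Icc _ _)
      ((continuous_apply i).comp hcont).continuousOn
      (fun s _ => (hasDerivAt_pi.1 (hz s) i).differentiableAt.differentiableWithinAt) ?_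
    intro s hs
    rw [interior_Icc] at hs
    rw [(hasDerivAt_pi.1 (hz s) i).deriv]
    exact hz' s ⟨hs.1.le, hs.2.le.trans ht₀T⟩ (hbefore s (Ioo_subset_Ico_self hs)) i
  exact hi.not_gt <| (h0 i).trans_le <|
    hmono (left_mem_Icc.2 ht₀0) (right_mem_Icc.2 ht₀0) ht₀0

theorem pos_of_hasDerivAt_mulVec [DecidableEq ι] {A : ℝ → Matrix ι ι ℝ} (hA : Continuous A)
    (hML : ∀ t i j, i ≠ j → 0 ≤ A t i j) {x : ℝ → ι → ℝ}
    (hx : ∀ t, HasDerivAt x (A t *ᵥ x t) t) (h0 : ∀ i, 0 < x 0 i) {T : ℝ} :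
    ∀ t ∈ Icc 0 T, ∀ i, 0 < x t i := by
  obtain ⟨c, hc⟩ := (isCompact_Icc (a := 0) (b := T)).exists_bound_of_continuousOn
    hA.matrix_diag.continuousOn
  have hshift : ∀ t ∈ Icc 0 T, ∀ i j, 0 ≤ (A t + c • 1) i j := fun t ht i j => by
    rcases eq_or_ne i j with rfl | hij
    · have := (norm_le_pi_norm (diag (A t)) i).trans (hc t ht)
      simpa [neg_le_iff_add_nonneg] using neg_le_of_abs_le this
    · simpa [hij] using hML t i j hij
  have hz : ∀ t, HasDerivAt (fun s => Real.exp (c * s) • x s)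
      (Real.exp (c * t) • ((A t + c • 1) *ᵥ x t)) t := fun t => by
    refine (((hasDerivAt_id t).const_mul c).exp.smul (hx t)).congr_deriv ?_
    simp [add_mulVec, smul_mulVec, smul_add, smul_smul]
  have hexp : ∀ t i, 0 < (Real.exp (c * t) • x t) i ↔ 0 < x t i := fun t i => by
    simp [Real.exp_pos, mul_pos_iff_of_pos_left]
  intro t ht i
  refine (hexp t i).1 (pos_of_hasDerivAt_of_deriv_nonneg_of_pos hz (by simpa [hexp] using h0)
    (fun s hs hpos k => ?_) t ht i)
  exact mul_nonneg (Real.exp_pos _).le <| sum_nonneg fun j _ =>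
    mul_nonneg (hshift s hs k j) ((hexp s j).1 (hpos j)).le

theorem nonneg_of_hasDerivAt_mul [DecidableEq ι] {A Φ : ℝ → Matrix ι ι ℝ} (hA : Continuous A)
    (hML : ∀ t i j, i ≠ j → 0 ≤ A t i j) (hΦ0 : Φ 0 = 1)
    (hΦ : ∀ t i j, HasDerivAt (fun s => Φ s i j) ((A t * Φ t) i j) t) {t : ℝ} (ht : 0 ≤ t)
    (i j : ι) : 0 ≤ Φ t i j := by
  let w : ℝ → ι → ℝ := fun δ => Pi.single j 1 + δ • 1
  have hpos : ∀ δ > 0, 0 < (Φ t *ᵥ w δ) i := fun δ hδ =>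
    pos_of_hasDerivAt_mulVec hA hML (hasDerivAt_mulVec_of_hasDerivAt_entries hΦ (w δ))
      (fun k => by simpa [hΦ0, w, Pi.single_apply] using by positivity) t ⟨ht, le_rfl⟩ i
  have hcont : Continuous fun δ => (Φ t *ᵥ w δ) i := by fun_prop
  have hlim : Tendsto (fun δ => (Φ t *ᵥ w δ) i) (𝓝[>] 0) (𝓝 (Φ t i j)) := by
    simpa [w, mulVec_single_one] using (hcont.tendsto 0).mono_left nhdsWithin_le_nhds
  exact ge_of_tendsto hlim (eventually_nhdsWithin_of_forall fun δ hδ => (hpos δ hδ).le)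

end LinearODE

section Kolotilina

theorem Fintype.sum_prod_eq_sum_diag_add_sum_lt {ι M : Type*} [Fintype ι] [LinearOrder ι]
    [AddCommMonoid M] (F : ι × ι → M) :
    ∑ p, F p =
      ∑ i, F (i, i) + ∑ p ∈ univ.filter (fun p : ι × ι => p.1 < p.2), (F p + F p.swap) := by
  have htri : ∀ p : ι × ι, F p = (if p.1 = p.2 then F p else 0) +
      ((if p.1 < p.2 then F p else 0) + if p.2 < p.1 then F p else 0) := fun p => by
    rcases lt_trichotomy p.1 p.2 with h | h | h
    · simp [h, h.ne, h.not_gt]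
    · simp [h]
    · simp [h, h.ne', h.not_gt]
  have hdiag : ∑ p ∈ univ.filter (fun p : ι × ι => p.1 = p.2), F p = ∑ i, F (i, i) := by
    rw [sum_filter, Fintype.sum_prod_type]
    simp
  have hgt : ∑ p ∈ univ.filter (fun p : ι × ι => p.2 < p.1), F p =
      ∑ p ∈ univ.filter (fun p : ι × ι => p.1 < p.2), F p.swap :=
    sum_nbij' Prod.swap Prod.swap (by simp) (by simp) (by simp) (by simp) (by simp)
  rw [Fintype.sum_congr _ _ htri, sum_add_distrib, sum_add_distrib, ← sum_filter,
    ← sum_filter, ← sum_filter, hdiag, hgt, sum_add_distrib]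

theorem two_mul_sqrt_mul_le_add_mul_div {a b x y : ℝ} (ha : 0 ≤ a) (hb : 0 ≤ b) (hx : 0 < x)
    (hy : 0 < y) : 2 * √(a * b) ≤ a * y / x + b * x / y := by
  have hsqrt : √(a * b) = √(a * y / x) * √(b * x / y) := by
    rw [← Real.sqrt_mul (by positivity)]
    congr 1
    field_simp
  calc 2 * √(a * b) = 2 * √(a * y / x) * √(b * x / y) := by rw [hsqrt, mul_assoc]
    _ ≤ √(a * y / x) ^ 2 + √(b * x / y) ^ 2 := two_mul_le_add_sq _ _
    _ = a * y / x + b * x / y := by rw [Real.sq_sqrt, Real.sq_sqrt] <;> positivity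

variable {ι : Type*} [Fintype ι] [LinearOrder ι]

/-- `kolotilinaSum A / n` is Kolotilina's lower bound for the Perron root of a nonnegative
`n × n` matrix `A`. -/
noncomputable def Matrix.kolotilinaSum (A : Matrix ι ι ℝ) : ℝ :=
  A.trace + 2 * ∑ p ∈ univ.filter (fun p : ι × ι => p.1 < p.2), √(A p.1 p.2 * A p.2 p.1)

theorem Matrix.kolotilinaSum_le_sum_mulVec_div {A : Matrix ι ι ℝ}
    (hML : ∀ i j, i ≠ j → 0 ≤ A i j) {x : ι → ℝ} (hx : ∀ i, 0 < x i) :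
    A.kolotilinaSum ≤ ∑ i, (A *ᵥ x) i / x i := by
  have hsum : ∑ i, (A *ᵥ x) i / x i = ∑ p : ι × ι, A p.1 p.2 * x p.2 / x p.1 := by
    simp [Fintype.sum_prod_type, mulVec, dotProduct, sum_div]
  rw [hsum, Fintype.sum_prod_eq_sum_diag_add_sum_lt, kolotilinaSum, mul_sum]
  gcongr with p hp
  · simp [trace, (hx _).ne']
  · have hp : p.1 ≠ p.2 := (mem_filter.1 hp).2.ne
    exact two_mul_sqrt_mul_le_add_mul_div (hML _ _ hp) (hML _ _ hp.symm) (hx _) (hx _)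

theorem Continuous.matrix_kolotilinaSum {X : Type*} [TopologicalSpace X] {A : X → Matrix ι ι ℝ}
    (hA : Continuous A) :
    Continuous fun t => (A t).kolotilinaSum := by
  unfold kolotilinaSum
  fun_prop

theorem integral_kolotilinaSum_le_sum_log_sub_sum_log {A : ℝ → Matrix ι ι ℝ}
    (hA : Continuous A) (hML : ∀ t i j, i ≠ j → 0 ≤ A t i j) {x : ℝ → ι → ℝ}
    (hx : ∀ t, HasDerivAt x (A t *ᵥ x t) t) (h0 : ∀ i, 0 < x 0 i) {T : ℝ} (hT : 0 ≤ T) :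
    ∫ t in 0..T, (A t).kolotilinaSum ≤ ∑ i, Real.log (x T i) - ∑ i, Real.log (x 0 i) := by
  have hpos := pos_of_hasDerivAt_mulVec hA hML hx h0 (T := T)
  have hlog : ∀ t ∈ Icc 0 T, HasDerivAt (fun s => ∑ i, Real.log (x s i))
      (∑ i, (A t *ᵥ x t) i / x t i) t := fun t ht =>
    HasDerivAt.fun_sum fun i _ => (hasDerivAt_pi.1 (hx t) i).log (hpos t ht i).ne'
  exact intervalIntegral.integral_le_sub_of_hasDeriv_right_of_le hT
    (HasDerivAt.continuousOn hlog)
    (fun t ht => (hlog t (Ioo_subset_Icc_self ht)).hasDerivWithinAt)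
    hA.matrix_kolotilinaSum.integrableOn_Icc
    (fun t ht => kolotilinaSum_le_sum_mulVec_div (hML t) (hpos t (Ioo_subset_Icc_self ht)))

theorem exp_integral_kolotilinaSum_div_card_le [Nonempty ι] {A Φ : ℝ → Matrix ι ι ℝ}
    (hA : Continuous A) (hML : ∀ t i j, i ≠ j → 0 ≤ A t i j) (hΦ0 : Φ 0 = 1)
    (hΦ : ∀ t i j, HasDerivAt (fun s => Φ s i j) ((A t * Φ t) i j) t) {T : ℝ} (hT : 0 ≤ T)
    {r : ℝ} {v : ι → ℝ} (hv : ∀ i, 0 < v i) (hr : ∀ i, (Φ T *ᵥ v) i ≤ r * v i) :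
    Real.exp ((∫ t in 0..T, (A t).kolotilinaSum) / Fintype.card ι) ≤ r := by
  have hx := hasDerivAt_mulVec_of_hasDerivAt_entries hΦ v
  have hx0 : Φ 0 *ᵥ v = v := by rw [hΦ0, one_mulVec]
  have hxT := pos_of_hasDerivAt_mulVec hA hML hx (by simpa [hx0]) T ⟨hT, le_rfl⟩
  have hint := integral_kolotilinaSum_le_sum_log_sub_sum_log hA hML hx (by simpa [hx0]) hT
  rw [hx0] at hint
  obtain ⟨i₀⟩ := (inferInstance : Nonempty ι)
  have hrpos : 0 < r := pos_of_mul_pos_left ((hxT i₀).trans_le (hr i₀)) (hv i₀).le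
  have hlog : ∑ i, Real.log ((Φ T *ᵥ v) i) ≤
      Fintype.card ι * Real.log r + ∑ i, Real.log (v i) :=
    calc ∑ i, Real.log ((Φ T *ᵥ v) i) ≤ ∑ i, Real.log (r * v i) :=
          sum_le_sum fun i _ => Real.log_le_log (hxT i) (hr i)
      _ = _ := by simp [Real.log_mul hrpos.ne' (hv _).ne', sum_add_distrib]
  rw [← Real.le_log_iff_exp_le hrpos, div_le_iff₀' (by exact_mod_cast Fintype.card_pos)]
  linarith

end Kolotilina

section Perron

variable {ι : Type*} [Fintype ι]

theorem Matrix.mulVec_pos {M : Matrix ι ι ℝ} (hM : ∀ i j, 0 < M i j) {u : ι → ℝ}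
    (hu : ∀ j, 0 ≤ u j) (hu' : ∃ j, 0 < u j) (i : ι) : 0 < (M *ᵥ u) i := by
  obtain ⟨j, hj⟩ := hu'
  exact sum_pos' (fun k _ => mul_nonneg (hM i k).le (hu k)) ⟨j, mem_univ j, mul_pos (hM i j) hj⟩

theorem Matrix.exists_pos_eigenvector_of_pos [Nonempty ι] {M : Matrix ι ι ℝ}
    (hM : ∀ i j, 0 < M i j) : ∃ (r : ℝ) (v : ι → ℝ), (∀ i, 0 < v i) ∧ M *ᵥ v = r • v := by
  -- Collatz–Wielandt: maximize `min_i (M w)_i / w_i` over the compact set `M '' stdSimplex`.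
  set K := (M *ᵥ ·) '' stdSimplex ℝ ι
  have hKpos : ∀ w ∈ K, ∀ i, 0 < w i := by
    rintro _ ⟨u, ⟨hu, hu1⟩, rfl⟩
    obtain ⟨j, -, hj⟩ := exists_lt_of_sum_lt (by simp [hu1] : ∑ _j : ι, (0 : ℝ) < ∑ j, u j)
    exact mulVec_pos hM hu ⟨j, hj⟩
  let f : (ι → ℝ) → ℝ := fun w => univ.inf' univ_nonempty fun i => (M *ᵥ w) i / w i
  have hf : ContinuousOn f K := ContinuousOn.finset_inf'_apply _ fun i _ =>
    ((continuous_apply i).comp (Continuous.matrix_mulVec continuous_const continuous_id)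
      ).continuousOn.div (continuous_apply i).continuousOn fun w hw => (hKpos w hw i).ne'
  obtain ⟨w, hwK, hwmax⟩ := ((isCompact_stdSimplex ℝ ι).image (by fun_prop)).exists_isMaxOn
    ((isPathConnected_stdSimplex ι).nonempty.image _) hf
  have hw := hKpos w hwK
  have hrw : ∀ i, f w * w i ≤ (M *ᵥ w) i := fun i =>
    (le_div_iff₀ (hw i)).1 (inf'_le _ (mem_univ i))
  refine ⟨f w, w, hw, ?_⟩
  by_contra hne
  set u := M *ᵥ w - f w • w
  have hu : ∀ i, 0 ≤ u i := fun i => by simpa [u] using hrw i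
  have hu' : ∃ i, 0 < u i := by
    by_contra! h
    exact hne (sub_eq_zero.1 (funext fun i => le_antisymm (h i) (hu i)))
  have hsum : 0 < ∑ i, w i := sum_pos (fun i _ => hw i) univ_nonempty
  set c := (∑ i, w i)⁻¹
  have hc : 0 < c := inv_pos.2 hsum
  have hcw : c • w ∈ stdSimplex ℝ ι :=
    ⟨fun i => by simpa using mul_nonneg hc.le (hw i).le,
      by simp [c, ← mul_sum, inv_mul_cancel₀ hsum.ne']⟩
  have hlt : f w < f (M *ᵥ (c • w)) := (lt_inf'_iff _).2 fun i _ => by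
    have := mulVec_pos hM hu hu' i
    simp only [u, mulVec_sub, mulVec_smul, Pi.sub_apply, Pi.smul_apply, smul_eq_mul] at this ⊢
    rw [mul_div_mul_left _ _ hc.ne',
      lt_div_iff₀ (mulVec_pos hM (fun j => (hw j).le) ⟨i, hw i⟩ i)]
    linarith
  exact (hwmax ⟨c • w, hcw, rfl⟩).not_gt hlt

theorem Matrix.le_sum_of_mulVec_eq_smul [Nonempty ι] {M : Matrix ι ι ℝ} (hM : ∀ i j, 0 ≤ M i j)
    {v : ι → ℝ} (hv : ∀ i, 0 < v i) {r : ℝ} (h : M *ᵥ v = r • v) : r ≤ ∑ i, ∑ j, M i j := by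
  obtain ⟨i, hi⟩ := Finite.exists_max v
  have : r * v i ≤ (∑ j, M i j) * v i := calc
    r * v i = ∑ j, M i j * v j := by simpa [mulVec, dotProduct] using (congrFun h i).symm
    _ ≤ ∑ j, M i j * v i := by gcongr with j; exacts [hM i j, hi j]
    _ = (∑ j, M i j) * v i := by rw [sum_mul]
  exact (le_of_mul_le_mul_right this (hv i)).trans <| single_le_sum
    (f := fun i => ∑ j, M i j) (fun i _ => sum_nonneg fun j _ => hM i j) (mem_univ i)

theorem Matrix.exists_mem_spectrum_ge [DecidableEq ι] [Nonempty ι] {P : Matrix ι ι ℝ}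
    (hP : ∀ i j, 0 ≤ P i j) {c : ℝ}
    (hc : ∀ (r : ℝ) (v : ι → ℝ), (∀ i, 0 < v i) → (∀ i, (P *ᵥ v) i ≤ r * v i) → c ≤ r) :
    ∃ r ∈ spectrum ℝ P, c ≤ r := by
  let J : Matrix ι ι ℝ := of fun _ _ => 1
  let ε : ℕ → ℝ := fun n => 1 / (n + 1)
  have hε : ∀ n, 0 < ε n := fun n => by positivity
  have hperron : ∀ n, ∃ (r : ℝ) (v : ι → ℝ), (∀ i, 0 < v i) ∧ (P + ε n • J) *ᵥ v = r • v :=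
    fun n => exists_pos_eigenvector_of_pos fun i j => by
      simpa [J] using add_pos_of_nonneg_of_pos (hP i j) (hε n)
  choose r v hv hrv using hperron
  have hr : ∀ n, r n ∈ Icc c (∑ i, ∑ j, (P i j + 1)) := fun n => by
    refine ⟨hc _ _ (hv n) fun i => ?_, ?_⟩
    · have := congrFun (hrv n) i
      rw [add_mulVec, Pi.add_apply, Pi.smul_apply, smul_eq_mul] at this
      rw [← this]
      exact le_add_of_nonneg_right (sum_nonneg fun j _ =>
        mul_nonneg (by simpa [J] using (hε n).le) (hv n j).le)
    · refine (le_sum_of_mulVec_eq_smul (fun i j => ?_) (hv n) (hrv n)).trans ?_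
      · simpa [J] using add_nonneg (hP i j) (hε n).le
      · gcongr with i _ j _
        simpa [J, ε] using inv_le_one_of_one_le₀ (le_add_of_nonneg_left n.cast_nonneg)
  obtain ⟨r₀, hr₀, φ, hφ, hlim⟩ := isCompact_Icc.tendsto_subseq hr
  have hdet : Continuous fun p : ℝ × ℝ => (p.2 • (1 : Matrix ι ι ℝ) - (P + p.1 • J)).det := by
    fun_prop
  have hεlim : Tendsto (ε ∘ φ) atTop (𝓝 0) :=
    tendsto_one_div_add_atTop_nhds_zero_nat.comp hφ.tendsto_atTop
  have hzero : (r₀ • (1 : Matrix ι ι ℝ) - P).det = 0 := by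
    simpa using (isClosed_eq hdet continuous_const).mem_of_tendsto (hεlim.prodMk_nhds hlim)
      (Eventually.of_forall fun n => exists_mulVec_eq_zero_iff.1 ⟨v (φ n),
        fun h => (hv _ (Classical.arbitrary ι)).ne' (congrFun h _),
        by simp [sub_mulVec, smul_mulVec, hrv]⟩)
  refine ⟨r₀, ?_, hr₀.1⟩
  rw [spectrum.mem_iff, Algebra.algebraMap_eq_smul_one, isUnit_iff_isUnit_det, hzero]
  exact not_isUnit_zero

theorem Matrix.ofReal_mem_spectrum_map [DecidableEq ι] {P : Matrix ι ι ℝ} {r : ℝ}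
    (hr : r ∈ spectrum ℝ P) : (r : ℂ) ∈ spectrum ℂ (P.map (fun x => (x : ℂ))) := by
  rw [mem_spectrum_iff_isRoot_charpoly] at hr ⊢
  have := hr.map (f := Complex.ofRealHom)
  rwa [← charpoly_map] at this

end Perron

theorem stmt17_general {N : ℕ} (T : ℝ) (hT : 0 < T)
    (A : ℝ → Matrix (Fin N) (Fin N) ℝ)
    (hAcont : Continuous A)
    (hML : ∀ t, ∀ i j, i ≠ j → 0 ≤ A t i j)
    (Φ : ℝ → Matrix (Fin N) (Fin N) ℝ)
    (hΦ0 : Φ 0 = 1)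
    (hΦ : ∀ t, ∀ i j, HasDerivAt (fun s => Φ s i j) ((A t * Φ t) i j) t)
    (P : Matrix (Fin N) (Fin N) ℝ) (hP : P = Φ T)
    (d : ℝ)
    (hd : (d : ℂ) ∈ spectrum ℂ (P.map (fun r => (r : ℂ))))
    (hdom : ∀ μ ∈ spectrum ℂ (P.map (fun r => (r : ℂ))), μ.re ≤ d) :
    IsUnit P ∧ (∀ i j, 0 ≤ P i j) ∧
      Real.log d ≥ (1 / (N : ℝ)) * ∫ t in (0 : ℝ)..T,
        (Matrix.trace (A t) +
          2 * ∑ p ∈ Finset.univ.filter (fun p : Fin N × Fin N => p.1 < p.2),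
            Real.sqrt (A t p.1 p.2 * A t p.2 p.1)) := by
  subst hP
  rcases isEmpty_or_nonempty (Fin N) with hN | hN
  · simp [spectrum.of_subsingleton] at hd
  have hnonneg := nonneg_of_hasDerivAt_mul hAcont hML hΦ0 hΦ hT.le
  obtain ⟨r, hr, hcr⟩ := exists_mem_spectrum_ge hnonneg fun r v hv hPv =>
    exp_integral_kolotilinaSum_div_card_le hAcont hML hΦ0 hΦ hT.le hv hPv
  have hrd : r ≤ d := by simpa using hdom r (ofReal_mem_spectrum_map hr)
  have hexp := hcr.trans hrd
  rw [Fintype.card_fin] at hexp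
  refine ⟨isUnit_of_hasDerivAt_mul hAcont hΦ0 hΦ T, hnonneg, ?_⟩
  rw [ge_iff_le, one_div_mul_eq_div, Real.le_log_iff_exp_le ((Real.exp_pos _).trans_le hexp)]
  exact hexp

/-- Kolotilina-type estimate for the Poincaré map of a time-periodic cooperative system:
`P` is nonsingular, entrywise nonnegative, and
`ln d(P) ≥ (1/N) ∫₀ᵀ (tr A(t) + 2 ∑_{j<k} √(a_{jk}(t) a_{kj}(t))) dt`. -/
theorem stmt17 {N : ℕ} (T : ℝ) (hT : 0 < T)
    (A : ℝ → Matrix (Fin N) (Fin N) ℝ)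
    (hAcont : Continuous A)
    (hper : ∀ t, A (t + T) = A t)
    (hML : ∀ t, ∀ i j, i ≠ j → 0 ≤ A t i j)
    (Φ : ℝ → Matrix (Fin N) (Fin N) ℝ)
    (hΦ0 : Φ 0 = 1)
    (hΦ : ∀ t, ∀ i j, HasDerivAt (fun s => Φ s i j) ((A t * Φ t) i j) t)
    (P : Matrix (Fin N) (Fin N) ℝ) (hP : P = Φ T)
    (d : ℝ)
    (hd : (d : ℂ) ∈ spectrum ℂ (P.map (fun r => (r : ℂ))))
    (hdom : ∀ μ ∈ spectrum ℂ (P.map (fun r => (r : ℂ))), μ.re ≤ d) :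
    IsUnit P ∧ (∀ i j, 0 ≤ P i j) ∧
      Real.log d ≥ (1 / (N : ℝ)) * ∫ t in (0 : ℝ)..T,
        (Matrix.trace (A t) +
          2 * ∑ p ∈ Finset.univ.filter (fun p : Fin N × Fin N => p.1 < p.2),
            Real.sqrt (A t p.1 p.2 * A t p.2 p.1)) :=
  stmt17_general T hT A hAcont hML Φ hΦ0 hΦ P hP d hd hdom
end
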